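/- arXiv:2508.11308 — 5 statements merged into one kernel-verified Lean document; each statement's English description precedes it below -/
import Mathlib

section
/- Let m, n ≥ 1 and let W : Matrix (Fin m × Fin n) (Fin m × Fin n) ℂ be block-positive. If for some k : Fin m the k-th diagonal block vanishes, i.e. W ((k,r),(k,s)) = 0 for all r, s : Fin n, then the entire k-th block row and block column vanish: for every j : Fin m and all r, s : Fin n, W ((k,r),(j,s)) = 0 and W ((j,r),(k,s)) = 0. -/
open Matrix ComplexOrder

noncomputable section

/-- The product vector `a ⊗ b`. -/
def prodVec {m n : ℕ} (a : Fin m → ℂ) (b : Fin n → ℂ) : Fin m × Fin n → ℂ :=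
  fun p => a p.1 * b p.2

/-- `W` is block-positive: Hermitian, and the quadratic form on every product
vector is real and nonnegative. -/
def BlockPositive {m n : ℕ} (W : Matrix (Fin m × Fin n) (Fin m × Fin n) ℂ) : Prop :=
  W.IsHermitian ∧ ∀ (a : Fin m → ℂ) (b : Fin n → ℂ),
    0 ≤ (star (prodVec a b) ⬝ᵥ W.mulVec (prodVec a b)).re ∧
    (star (prodVec a b) ⬝ᵥ W.mulVec (prodVec a b)).im = 0

/-- Partial transpose: `M^Γ ((i,k),(j,l)) = M ((j,k),(i,l))`. -/
def ptrans {m n : ℕ} (M : Matrix (Fin m × Fin n) (Fin m × Fin n) ℂ) :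
    Matrix (Fin m × Fin n) (Fin m × Fin n) ℂ :=
  fun p q => M (q.1, p.2) (p.1, q.2)

/-- `W` is decomposable: `W = P + Q^Γ` with `P, Q` positive semidefinite. -/
def Decomposable {m n : ℕ} (W : Matrix (Fin m × Fin n) (Fin m × Fin n) ℂ) : Prop :=
  ∃ P Q : Matrix (Fin m × Fin n) (Fin m × Fin n) ℂ,
    P.PosSemidef ∧ Q.PosSemidef ∧ W = P + ptrans Q

/-- Negativity: absolute value of the sum of the negative eigenvalues. -/
noncomputable def negativity {N : Type*} [Fintype N] [DecidableEq N]
    {W : Matrix N N ℂ} (hW : W.IsHermitian) : ℝ :=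
  ∑ i, max (-(hW.eigenvalues i)) 0

/-- The eigenvalues of a Hermitian matrix, listed in non-increasing order with
multiplicity. -/
noncomputable def sortedEigs {N : Type*} [Fintype N] [DecidableEq N]
    {W : Matrix N N ℂ} (hW : W.IsHermitian) : List ℝ :=
  (Finset.univ.val.map hW.eigenvalues).sort (· ≥ ·)

/-- Summing a two-branch indicator. -/
lemma sum_ind2 {N : ℕ} {k j : Fin N} (h : j ≠ k) (f g : Fin N → ℂ) :
    ∑ i, (if i = k then f i else if i = j then g i else 0) = f k + g j := by
  have : ∀ i ∈ Finset.univ, (if i = k then f i else if i = j then g i else 0)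
      = (if i = k then f k else 0) + (if i = j then g j else 0) := by
    intro i _
    by_cases hik : i = k
    · subst hik; simp [Ne.symm h]
    · by_cases hij : i = j <;> simp [hik, hij, h]
  rw [Finset.sum_congr rfl this]
  simp [Finset.sum_add_distrib]

/-- Polarization: a matrix whose sesquilinear form vanishes identically is zero. -/
lemma form_zero {n : ℕ} (M : Matrix (Fin n) (Fin n) ℂ)
    (h : ∀ b : Fin n → ℂ, ∑ r, ∑ s, (starRingEnd ℂ) (b r) * M r s * b s = 0) :
    ∀ r s, M r s = 0 := by
  have diag : ∀ r, M r r = 0 := by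
    intro r
    have hb := h (fun i => if i = r then 1 else 0)
    simpa [apply_ite (starRingEnd ℂ), ite_mul, mul_ite, Finset.sum_ite_eq'] using hb
  intro r s
  by_cases hrs : r = s
  · subst hrs; exact diag r
  have key : ∀ x : ℂ, (starRingEnd ℂ) x * M s r + x * M r s = 0 := by
    intro x
    have hb := h (fun i => if i = s then x else if i = r then 1 else 0)
    have e1 : ∀ r' : Fin n,
        (∑ s', (starRingEnd ℂ) ((fun i => if i = s then x else if i = r then 1 else 0) r')
          * M r' s' * (fun i => if i = s then x else if i = r then 1 else 0) s')
        = (starRingEnd ℂ) ((fun i => if i = s then x else if i = r then 1 else 0) r')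
            * (M r' s * x + M r' r) := by
      intro r'
      simp only [mul_ite, mul_one, mul_zero]
      rw [sum_ind2 hrs]
      ring
    rw [Finset.sum_congr rfl (fun r' _ => e1 r')] at hb
    simp only [apply_ite (starRingEnd ℂ), _root_.map_one, map_zero, ite_mul, zero_mul] at hb
    rw [sum_ind2 hrs] at hb
    simp only [one_mul] at hb
    rw [diag r, diag s] at hb
    rw [← hb]; ring
  have k1 := key 1
  have k2 := key Complex.I
  simp only [_root_.map_one, one_mul] at k1
  rw [Complex.conj_I] at k2
  have h2 : M r s = M s r := by
    have : Complex.I * (M r s - M s r) = 0 := by rw [← k2]; ring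
    rcases mul_eq_zero.mp this with h' | h'
    · exact absurd h' Complex.I_ne_zero
    · linear_combination h'
  have h3 : (2 : ℂ) * M r s = 0 := by
    rw [two_mul]; nth_rewrite 2 [h2]; rw [add_comm]; exact k1
  rcases mul_eq_zero.mp h3 with h' | h'
  · norm_num at h'
  · exact h'

/-- Expansion of the quadratic form on a product vector. -/
lemma quad_expand {m n : ℕ} (W : Matrix (Fin m × Fin n) (Fin m × Fin n) ℂ)
    (a : Fin m → ℂ) (b : Fin n → ℂ) :
    star (prodVec a b) ⬝ᵥ W.mulVec (prodVec a b)
      = ∑ i, (starRingEnd ℂ) (a i) *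
          ∑ i', a i' * ∑ r, ∑ s, (starRingEnd ℂ) (b r) * W (i, r) (i', s) * b s := by
  simp only [dotProduct, mulVec, prodVec, Pi.star_apply, Fintype.sum_prod_type,
    Finset.mul_sum, Finset.sum_mul]
  refine Finset.sum_congr rfl fun i _ => ?_
  rw [Finset.sum_comm]
  refine Finset.sum_congr rfl fun i' _ => Finset.sum_congr rfl fun r _ =>
    Finset.sum_congr rfl fun s _ => ?_
  simp only [star_mul', Complex.star_def, _root_.map_mul]
  ring

/-- Value of the quadratic form on `(t·e_k + e_j) ⊗ b`. -/
lemma quad_eval {m n : ℕ} (W : Matrix (Fin m × Fin n) (Fin m × Fin n) ℂ)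
    {k j : Fin m} (hjk : j ≠ k) (t : ℂ) (b : Fin n → ℂ) :
    star (prodVec (fun i => if i = k then t else if i = j then 1 else 0) b) ⬝ᵥ
        W.mulVec (prodVec (fun i => if i = k then t else if i = j then 1 else 0) b)
      = (starRingEnd ℂ) t *
          (t * (∑ r, ∑ s, (starRingEnd ℂ) (b r) * W (k, r) (k, s) * b s) +
            ∑ r, ∑ s, (starRingEnd ℂ) (b r) * W (k, r) (j, s) * b s) +
        (t * (∑ r, ∑ s, (starRingEnd ℂ) (b r) * W (j, r) (k, s) * b s) +
          ∑ r, ∑ s, (starRingEnd ℂ) (b r) * W (j, r) (j, s) * b s) := by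
  rw [quad_expand]
  simp only [apply_ite (starRingEnd ℂ), _root_.map_one, map_zero, ite_mul, one_mul, zero_mul]
  rw [sum_ind2 hjk]
  rw [sum_ind2 hjk, sum_ind2 hjk]

/-- Key lemma: the off-diagonal sesquilinear form vanishes. -/
lemma offdiag_form_zero {m n : ℕ}
    (W : Matrix (Fin m × Fin n) (Fin m × Fin n) ℂ) (hW : BlockPositive W)
    (k : Fin m) (hk : ∀ r s : Fin n, W (k, r) (k, s) = 0)
    (j : Fin m) (hjk : j ≠ k) (b : Fin n → ℂ) :
    ∑ r, ∑ s, (starRingEnd ℂ) (b r) * W (k, r) (j, s) * b s = 0 := by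
  have herm : ∀ p q, (starRingEnd ℂ) (W p q) = W q p := by
    intro p q
    conv_rhs => rw [← hW.1]
    simp [conjTranspose_apply, Complex.star_def]
  have hBkk : (∑ r, ∑ s, (starRingEnd ℂ) (b r) * W (k, r) (k, s) * b s) = 0 := by
    simp [hk]
  have hconjC : (starRingEnd ℂ) (∑ r, ∑ s, (starRingEnd ℂ) (b r) * W (k, r) (j, s) * b s)
      = ∑ r, ∑ s, (starRingEnd ℂ) (b r) * W (j, r) (k, s) * b s :=
    calc (starRingEnd ℂ) (∑ r, ∑ s, (starRingEnd ℂ) (b r) * W (k, r) (j, s) * b s)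
        = ∑ r, ∑ s, b r * W (j, s) (k, r) * (starRingEnd ℂ) (b s) := by
          rw [map_sum]
          refine Finset.sum_congr rfl fun r _ => ?_
          rw [map_sum]
          refine Finset.sum_congr rfl fun s _ => ?_
          simp only [_root_.map_mul, Complex.conj_conj, herm]
      _ = ∑ s, ∑ r, b r * W (j, s) (k, r) * (starRingEnd ℂ) (b s) := Finset.sum_comm
      _ = ∑ r, ∑ s, (starRingEnd ℂ) (b r) * W (j, r) (k, s) * b s := by
          refine Finset.sum_congr rfl fun r _ => Finset.sum_congr rfl fun s _ => ?_
          ring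
  have hQ : ∀ t : ℂ, 0 ≤ ((starRingEnd ℂ) t *
      (t * 0 + ∑ r, ∑ s, (starRingEnd ℂ) (b r) * W (k, r) (j, s) * b s) +
      (t * (starRingEnd ℂ) (∑ r, ∑ s, (starRingEnd ℂ) (b r) * W (k, r) (j, s) * b s) +
        ∑ r, ∑ s, (starRingEnd ℂ) (b r) * W (j, r) (j, s) * b s)).re := by
    intro t
    have h1 := (hW.2 (fun i => if i = k then t else if i = j then 1 else 0) b).1
    rw [quad_eval W hjk t b, hBkk, ← hconjC] at h1
    exact h1
  set C := ∑ r, ∑ s, (starRingEnd ℂ) (b r) * W (k, r) (j, s) * b s with hC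
  set D := ∑ r, ∑ s, (starRingEnd ℂ) (b r) * W (j, r) (j, s) * b s with hD
  by_contra h0
  have hns : Complex.normSq C ≠ 0 := by
    simpa [Complex.normSq_eq_zero] using h0
  set rr : ℝ := -(D.re + 1) / (2 * Complex.normSq C) with hrr
  have hQt := hQ ((rr : ℂ) * C)
  have hval : (starRingEnd ℂ) ((rr : ℂ) * C) * (((rr : ℂ) * C) * 0 + C) +
      (((rr : ℂ) * C) * (starRingEnd ℂ) C + D)
      = ((2 * rr * Complex.normSq C : ℝ) : ℂ) + D := by
    rw [_root_.map_mul, Complex.conj_ofReal]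
    push_cast
    linear_combination (2 * (rr : ℂ)) * Complex.mul_conj C
  rw [hval] at hQt
  have hre : ((2 * rr * Complex.normSq C : ℝ) : ℂ) + D
      = Complex.ofReal (2 * rr * Complex.normSq C) + D := rfl
  have : 0 ≤ 2 * rr * Complex.normSq C + D.re := by
    simpa using hQt
  have hval2 : 2 * rr * Complex.normSq C = -(D.re + 1) := by
    rw [hrr]
    field_simp
  rw [hval2] at this
  linarith

/-- If the `k`-th diagonal block of a block-positive matrix vanishes, then the
entire `k`-th block row and block column vanish. -/
theorem stmt_0 {m n : ℕ} (hm : 1 ≤ m) (hn : 1 ≤ n)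
    (W : Matrix (Fin m × Fin n) (Fin m × Fin n) ℂ) (hW : BlockPositive W)
    (k : Fin m) (hk : ∀ r s : Fin n, W (k, r) (k, s) = 0) :
    ∀ (j : Fin m) (r s : Fin n), W (k, r) (j, s) = 0 ∧ W (j, r) (k, s) = 0 := by
  have herm : ∀ p q, (starRingEnd ℂ) (W p q) = W q p := by
    intro p q
    conv_rhs => rw [← hW.1]
    simp [conjTranspose_apply, Complex.star_def]
  have row : ∀ (j : Fin m) (r s : Fin n), W (k, r) (j, s) = 0 := by
    intro j r s
    by_cases hjk : j = k
    · subst hjk; exact hk r s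
    · exact form_zero (fun r s => W (k, r) (j, s))
        (offdiag_form_zero W hW k hk j hjk) r s
  intro j r s
  refine ⟨row j r s, ?_⟩
  rw [← herm (k, s) (j, r), row j s r, map_zero]

end
end

section
/- Let m, n ≥ 1 and let W : Matrix (Fin m × Fin n) (Fin m × Fin n) ℂ be block-positive. If for some k : Fin n the k-th diagonal entry of every diagonal block vanishes, i.e. W ((i,k),(i,k)) = 0 for all i : Fin m, then the k-th row and column of every block vanish: for all i, j : Fin m and all r : Fin n, W ((i,r),(j,k)) = 0 and W ((i,k),(j,r)) = 0. -/
open Matrix ComplexOrder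
open scoped InnerProductSpace

noncomputable section

-- polarization
lemma quad_zero {N : Type*} [Fintype N] [DecidableEq N] (D : Matrix N N ℂ)
    (h : ∀ x : N → ℂ, star x ⬝ᵥ D.mulVec x = 0) : D = 0 := by
  have h2 : ∀ x : EuclideanSpace ℂ N, ⟪(Matrix.toEuclideanLin D) x, x⟫_ℂ = 0 := by
    intro x
    rw [← inner_conj_symm]
    have : ⟪x, (Matrix.toEuclideanLin D) x⟫_ℂ = star ((WithLp.equiv 2 _) x) ⬝ᵥ D.mulVec ((WithLp.equiv 2 _) x) := by
      rw [EuclideanSpace.inner_eq_star_dotProduct, dotProduct_comm]; rfl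
    rw [this, h, map_zero]
  have := (inner_map_self_eq_zero (Matrix.toEuclideanLin D)).mp h2
  exact Matrix.toEuclideanLin.injective (by simpa using this)

lemma herm_of_im {N : Type*} [Fintype N] [DecidableEq N] (A : Matrix N N ℂ)
    (h : ∀ x : N → ℂ, (star x ⬝ᵥ A.mulVec x).im = 0) : A.IsHermitian := by
  have key : ∀ x : N → ℂ, star x ⬝ᵥ Aᴴ.mulVec x = star (star x ⬝ᵥ A.mulVec x) := by
    intro x
    simp [dotProduct, Matrix.mulVec, Matrix.conjTranspose_apply,
      Finset.mul_sum, Finset.sum_mul, map_sum]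
    rw [Finset.sum_comm]
    congr 1; ext p; congr 1; ext q; ring
  have : A - Aᴴ = 0 := by
    apply quad_zero
    intro x
    rw [Matrix.sub_mulVec, dotProduct_sub, key]
    have hr := h x
    have : star (star x ⬝ᵥ A.mulVec x) = star x ⬝ᵥ A.mulVec x := by
      apply Complex.conj_eq_iff_im.mpr hr
    rw [this, sub_self]
  unfold Matrix.IsHermitian
  linear_combination (norm := abel) -this


lemma sum4_swap {α : Type*} [AddCommMonoid α] {m n : ℕ}
    (f : Fin m → Fin m → Fin n → Fin n → α) :
    ∑ i, ∑ j, ∑ r, ∑ s, f i j r s = ∑ r, ∑ s, ∑ i, ∑ j, f i j r s := by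
  have h1 : ∀ (g : Fin m → Fin n → Fin n → α),
      ∑ j, ∑ r, ∑ s, g j r s = ∑ r, ∑ s, ∑ j, g j r s := by
    intro g
    rw [Finset.sum_comm]
    exact Finset.sum_congr rfl fun r _ => Finset.sum_comm
  calc ∑ i, ∑ j, ∑ r, ∑ s, f i j r s
      = ∑ i, ∑ r, ∑ s, ∑ j, f i j r s := Finset.sum_congr rfl fun i _ => h1 _
    _ = ∑ r, ∑ i, ∑ s, ∑ j, f i j r s := Finset.sum_comm
    _ = ∑ r, ∑ s, ∑ i, ∑ j, f i j r s := Finset.sum_congr rfl fun r _ => Finset.sum_comm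

lemma quad_eq {m n : ℕ} (W : Matrix (Fin m × Fin n) (Fin m × Fin n) ℂ)
    (a : Fin m → ℂ) (b : Fin n → ℂ) :
    star (prodVec a b) ⬝ᵥ W.mulVec (prodVec a b)
      = ∑ i, ∑ j, ∑ r, ∑ s,
          (starRingEnd ℂ) (a i) * (starRingEnd ℂ) (b r) * W (i,r) (j,s) * a j * b s := by
  simp only [dotProduct, mulVec, prodVec, Pi.star_apply, Fintype.sum_prod_type,
    Finset.mul_sum, Finset.sum_mul]
  refine Finset.sum_congr rfl fun i _ => ?_
  rw [Finset.sum_comm]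
  refine Finset.sum_congr rfl fun j _ => ?_
  refine Finset.sum_congr rfl fun r _ => ?_
  refine Finset.sum_congr rfl fun s _ => ?_
  simp only [RCLike.star_def, _root_.map_mul]
  ring

lemma quad_eq_a {m n : ℕ} (W : Matrix (Fin m × Fin n) (Fin m × Fin n) ℂ)
    (a : Fin m → ℂ) (b : Fin n → ℂ) :
    star (prodVec a b) ⬝ᵥ W.mulVec (prodVec a b)
      = star b ⬝ᵥ (Matrix.of fun r s => ∑ i, ∑ j,
          (starRingEnd ℂ) (a i) * W (i,r) (j,s) * a j).mulVec b := by
  rw [quad_eq, sum4_swap]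
  simp only [dotProduct, mulVec, Matrix.of_apply, Pi.star_apply, Finset.mul_sum, Finset.sum_mul]
  refine Finset.sum_congr rfl fun r _ => ?_
  refine Finset.sum_congr rfl fun s _ => ?_
  refine Finset.sum_congr rfl fun i _ => ?_
  refine Finset.sum_congr rfl fun j _ => ?_
  simp only [RCLike.star_def]
  ring

lemma quad_eq_b {m n : ℕ} (W : Matrix (Fin m × Fin n) (Fin m × Fin n) ℂ)
    (a : Fin m → ℂ) (b : Fin n → ℂ) :
    star (prodVec a b) ⬝ᵥ W.mulVec (prodVec a b)
      = star a ⬝ᵥ (Matrix.of fun i j => ∑ r, ∑ s,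
          (starRingEnd ℂ) (b r) * W (i,r) (j,s) * b s).mulVec a := by
  rw [quad_eq]
  simp only [dotProduct, mulVec, Matrix.of_apply, Pi.star_apply, Finset.mul_sum, Finset.sum_mul]
  refine Finset.sum_congr rfl fun i _ => ?_
  refine Finset.sum_congr rfl fun j _ => ?_
  refine Finset.sum_congr rfl fun r _ => ?_
  refine Finset.sum_congr rfl fun s _ => ?_
  simp only [RCLike.star_def]
  ring

lemma mk_psd {N : Type*} [Fintype N] [DecidableEq N] (A : Matrix N N ℂ)
    (h : ∀ x : N → ℂ, 0 ≤ (star x ⬝ᵥ A.mulVec x).re ∧ (star x ⬝ᵥ A.mulVec x).im = 0) :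
    A.PosSemidef := by
  refine .of_dotProduct_mulVec_nonneg (herm_of_im A (fun x => (h x).2)) fun x => ?_
  rw [Complex.le_def]
  simpa using (h x).imp id Eq.symm

lemma psd_col_zero {N : Type*} [Fintype N] [DecidableEq N] {A : Matrix N N ℂ}
    (hA : A.PosSemidef) (j : N) (hj : A j j = 0) (i : N) : A i j = 0 := by
  have h0 : star (Pi.single j 1 : N → ℂ) ⬝ᵥ A.mulVec (Pi.single j 1) = 0 := by
    simp [Matrix.mulVec, dotProduct, Pi.single_apply, apply_ite, hj]
  have := (hA.dotProduct_mulVec_zero_iff (Pi.single j 1)).mp h0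
  have := congrFun this i
  simpa [Matrix.mulVec, dotProduct, Pi.single_apply] using this

/-- If the `k`-th diagonal entry of every diagonal block of a block-positive
matrix vanishes, then the `k`-th row and column of every block vanish. -/
theorem stmt_1 {m n : ℕ} (hm : 1 ≤ m) (hn : 1 ≤ n)
    (W : Matrix (Fin m × Fin n) (Fin m × Fin n) ℂ) (hW : BlockPositive W)
    (k : Fin n) (hk : ∀ i : Fin m, W (i, k) (i, k) = 0) :
    ∀ (i j : Fin m) (r : Fin n), W (i, r) (j, k) = 0 ∧ W (i, k) (j, r) = 0 := by
  have hconj : ∀ p q, (starRingEnd ℂ) (W p q) = W q p := by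
    intro p q
    have := congrFun (congrFun hW.1 q) p
    simpa [Matrix.conjTranspose_apply] using this
  -- Step 1: the matrix (i,j) ↦ W (i,k) (j,k) vanishes
  set Ck : Matrix (Fin m) (Fin m) ℂ := Matrix.of fun i j => ∑ r, ∑ s,
      (starRingEnd ℂ) ((Pi.single k 1 : Fin n → ℂ) r) * W (i,r) (j,s)
        * (Pi.single k 1 : Fin n → ℂ) s with hCk
  have hCk_entry : ∀ i j, Ck i j = W (i,k) (j,k) := by
    intro i j
    simp [hCk, Pi.single_apply, apply_ite, Finset.sum_ite_eq', Finset.mem_univ]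
  have hCk_psd : Ck.PosSemidef := by
    refine mk_psd _ fun x => ?_
    rw [← quad_eq_b]
    exact hW.2 x (Pi.single k 1)
  have h1 : ∀ i j, W (i,k) (j,k) = 0 := by
    intro i j
    have := psd_col_zero hCk_psd j (by rw [hCk_entry]; exact hk j) i
    rwa [hCk_entry] at this
  -- Step 2: for every a, the PSD matrix M a has vanishing column k
  have h2 : ∀ (a : Fin m → ℂ) (r : Fin n),
      ∑ i, ∑ j, (starRingEnd ℂ) (a i) * W (i,r) (j,k) * a j = 0 := by
    intro a r
    set Ma : Matrix (Fin n) (Fin n) ℂ := Matrix.of fun r s => ∑ i, ∑ j,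
        (starRingEnd ℂ) (a i) * W (i,r) (j,s) * a j with hMa
    have hMa_psd : Ma.PosSemidef := by
      refine mk_psd _ fun x => ?_
      rw [← quad_eq_a]
      exact hW.2 a x
    have hdiag : Ma k k = 0 := by
      simp only [hMa, Matrix.of_apply, h1, mul_zero, zero_mul, Finset.sum_const_zero]
    exact psd_col_zero hMa_psd k hdiag r
  intro i j r
  have hD : (Matrix.of fun i j => W (i,r) (j,k)) = 0 := by
    apply quad_zero
    intro x
    have := h2 x r
    rw [← this]
    simp only [dotProduct, Matrix.mulVec, Matrix.of_apply, Pi.star_apply,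
      Finset.mul_sum]
    refine Finset.sum_congr rfl fun i _ => Finset.sum_congr rfl fun j _ => ?_
    simp only [RCLike.star_def]
    ring
  have hrow : W (i,r) (j,k) = 0 := by
    have := congrFun (congrFun hD i) j
    simpa using this
  refine ⟨hrow, ?_⟩
  have : W (j,r) (i,k) = 0 := by
    have := congrFun (congrFun hD j) i
    simpa using this
  rw [← hconj (j,r) (i,k), this, map_zero]


end
end

section
/- Let m, n ≥ 2 and let D : Matrix (Fin m × Fin n) (Fin m × Fin n) ℂ be a diagonal matrix with real diagonal entries, exactly two of which equal √2 + 1 and all the others equal 1. Then for every unitary matrix U : Matrix (Fin m × Fin n) (Fin m × Fin n) ℂ, the partial transpose (U * D * Uᴴ)^Γ is positive semidefinite. (That is, D is absolutely PPT.) -/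
open Matrix ComplexOrder

noncomputable section

namespace APPT
open Finset
local notation "conj" => starRingEnd ℂ


lemma abs_sum_conj_mul_le {κ : Type*} (s : Finset κ) (f g : κ → ℂ) :
    ‖∑ i ∈ s, conj (f i) * g i‖ ≤
      Real.sqrt (∑ i ∈ s, Complex.normSq (f i)) * Real.sqrt (∑ i ∈ s, Complex.normSq (g i)) := by
  calc ‖∑ i ∈ s, conj (f i) * g i‖ ≤ ∑ i ∈ s, ‖conj (f i) * g i‖ :=
        norm_sum_le _ _
    _ = ∑ i ∈ s, Real.sqrt (Complex.normSq (f i)) * Real.sqrt (Complex.normSq (g i)) := by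
        refine Finset.sum_congr rfl fun i _ => ?_
        rw [norm_mul, Complex.norm_conj, Complex.norm_def, Complex.norm_def]
    _ ≤ _ := Real.sum_sqrt_mul_sqrt_le _ (fun i => Complex.normSq_nonneg _)
        (fun i => Complex.normSq_nonneg _)

lemma sqrt_cs2 {a b c d : ℝ} (ha : 0 ≤ a) (hb : 0 ≤ b) (hc : 0 ≤ c) (hd : 0 ≤ d) :
    Real.sqrt (a*b) + Real.sqrt (c*d) ≤ Real.sqrt ((a+c)*(b+d)) := by
  have h := Real.sum_sqrt_mul_sqrt_le (Finset.univ : Finset (Fin 2)) (f := ![a,c]) (g := ![b,d])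
    (by intro i; fin_cases i <;> assumption) (by intro i; fin_cases i <;> assumption)
  simp only [Fin.sum_univ_two, Matrix.cons_val_zero, Matrix.cons_val_one, Matrix.head_cons] at h
  rw [Real.sqrt_mul ha, Real.sqrt_mul hc, Real.sqrt_mul (by linarith)]
  exact h

lemma one_le_sqrt_two : (1:ℝ) ≤ Real.sqrt 2 := by
  nlinarith [Real.sq_sqrt (by norm_num : (0:ℝ) ≤ 2), Real.sqrt_nonneg 2]

lemma lemL {β : Type*} [DecidableEq β] {P : Finset β} {w : β → ℝ} {t u : β → ℂ} {Z : ℝ}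
    (hZ : 0 ≤ Z)
    (hw0 : ∀ p ∈ P, 0 ≤ w p)
    (hw2 : ∀ p ∈ P, w p ≤ Z/2)
    (hww : ∀ p ∈ P, ∀ q ∈ P, p ≠ q → w p + w q ≤ Real.sqrt 2 / 2 * Z)
    (hα : ∑ p ∈ P, Complex.normSq (t p) ≤ 1)
    (hβ : ∑ p ∈ P, Complex.normSq (u p) ≤ 1)
    (hin : ‖∑ p ∈ P, conj (t p) * u p‖ ≤
      Real.sqrt ((1 - ∑ p ∈ P, Complex.normSq (t p)) * (1 - ∑ p ∈ P, Complex.normSq (u p)))) :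
    ∑ p ∈ P, w p * (Complex.normSq (t p) + Complex.normSq (u p)) ≤ Real.sqrt 2 / 2 * Z := by
  rcases P.eq_empty_or_nonempty with rfl | hne
  · simp only [Finset.sum_empty]
    positivity
  obtain ⟨p₁, hp₁, hmax⟩ := P.exists_max_image w hne
  set α := ∑ p ∈ P, Complex.normSq (t p) with hαdef
  set β' := ∑ p ∈ P, Complex.normSq (u p) with hβdef
  set x₁ := Complex.normSq (t p₁) with hx₁
  set y₁ := Complex.normSq (u p₁) with hy₁
  have hx₁0 : 0 ≤ x₁ := Complex.normSq_nonneg _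
  have hy₁0 : 0 ≤ y₁ := Complex.normSq_nonneg _
  have hx₁α : x₁ ≤ α := Finset.single_le_sum (fun i _ => Complex.normSq_nonneg (t i)) hp₁
  have hy₁β : y₁ ≤ β' := Finset.single_le_sum (fun i _ => Complex.normSq_nonneg (u i)) hp₁
  have hes : ∑ p ∈ P.erase p₁, Complex.normSq (t p) = α - x₁ := by
    rw [Finset.sum_erase_eq_sub hp₁]
  have hes' : ∑ p ∈ P.erase p₁, Complex.normSq (u p) = β' - y₁ := by
    rw [Finset.sum_erase_eq_sub hp₁]
  -- key : x₁ + y₁ ≤ 1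
  have hkey : x₁ + y₁ ≤ 1 := by
    have hsplit : conj (t p₁) * u p₁ =
        (∑ p ∈ P, conj (t p) * u p) - ∑ p ∈ P.erase p₁, conj (t p) * u p := by
      rw [← Finset.add_sum_erase P _ hp₁]; ring
    have h1 : Real.sqrt (x₁ * y₁) ≤
        Real.sqrt ((1-α)*(1-β')) + Real.sqrt ((α-x₁)*(β'-y₁)) := by
      have habs : ‖conj (t p₁) * u p₁‖ = Real.sqrt (x₁ * y₁) := by
        rw [norm_mul, Complex.norm_conj, Complex.norm_def, Complex.norm_def,
          ← Real.sqrt_mul (Complex.normSq_nonneg _)]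
      have h2 : ‖∑ p ∈ P.erase p₁, conj (t p) * u p‖ ≤
          Real.sqrt ((α-x₁)*(β'-y₁)) := by
        refine (abs_sum_conj_mul_le _ t u).trans ?_
        rw [hes, hes', ← Real.sqrt_mul (by linarith)]
      calc Real.sqrt (x₁ * y₁) = ‖conj (t p₁) * u p₁‖ := habs.symm
        _ ≤ ‖∑ p ∈ P, conj (t p) * u p‖
            + ‖∑ p ∈ P.erase p₁, conj (t p) * u p‖ := by
            rw [hsplit]
            exact norm_sub_le _ _
        _ ≤ _ := add_le_add hin h2
    have h3 : Real.sqrt ((1-α)*(1-β')) + Real.sqrt ((α-x₁)*(β'-y₁)) ≤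
        Real.sqrt ((1-x₁)*(1-y₁)) := by
      have := sqrt_cs2 (a := 1-α) (b := 1-β') (c := α-x₁) (d := β'-y₁)
        (by linarith) (by linarith) (by linarith) (by linarith)
      convert this using 3 <;> ring
    have h4 : x₁ * y₁ ≤ (1-x₁)*(1-y₁) := by
      have h5 := h1.trans h3
      have h6 := Real.sq_sqrt (mul_nonneg hx₁0 hy₁0)
      have h7 := Real.sq_sqrt (mul_nonneg (by linarith : (0:ℝ) ≤ 1-x₁) (by linarith : (0:ℝ) ≤ 1-y₁))
      nlinarith [Real.sqrt_nonneg (x₁*y₁), Real.sqrt_nonneg ((1-x₁)*(1-y₁))]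
    nlinarith
  -- assemble
  have hsplit2 : ∑ p ∈ P, w p * (Complex.normSq (t p) + Complex.normSq (u p)) =
      w p₁ * (x₁ + y₁) + ∑ p ∈ P.erase p₁, w p * (Complex.normSq (t p) + Complex.normSq (u p)) := by
    rw [← Finset.add_sum_erase P _ hp₁]
  rcases (P.erase p₁).eq_empty_or_nonempty with he | hne2
  · rw [hsplit2, he, Finset.sum_empty, add_zero]
    have hw1 : w p₁ ≤ Z/2 := hw2 _ hp₁
    have hw1' : 0 ≤ w p₁ := hw0 _ hp₁
    nlinarith [one_le_sqrt_two]
  · obtain ⟨p₂, hp₂, hmax2⟩ := (P.erase p₁).exists_max_image w hne2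
    have hp₂P : p₂ ∈ P := Finset.mem_of_mem_erase hp₂
    have hp₂ne : p₂ ≠ p₁ := Finset.ne_of_mem_erase hp₂
    have hw2' : 0 ≤ w p₂ := hw0 _ hp₂P
    have hw21 : w p₂ ≤ w p₁ := hmax _ hp₂P
    have hw12 : w p₁ + w p₂ ≤ Real.sqrt 2 / 2 * Z := hww _ hp₁ _ hp₂P (Ne.symm hp₂ne)
    have hrest : ∑ p ∈ P.erase p₁, w p * (Complex.normSq (t p) + Complex.normSq (u p)) ≤
        w p₂ * ((α - x₁) + (β' - y₁)) := by
      rw [← hes, ← hes', ← Finset.sum_add_distrib, Finset.mul_sum]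
      refine Finset.sum_le_sum fun p hp => ?_
      have := hmax2 _ hp
      have h0 : 0 ≤ Complex.normSq (t p) + Complex.normSq (u p) :=
        add_nonneg (Complex.normSq_nonneg _) (Complex.normSq_nonneg _)
      exact mul_le_mul_of_nonneg_right this h0
    rw [hsplit2]
    nlinarith [hrest, hkey, hx₁0, hy₁0, hα, hβ, hw21, hw2', hw12,
      mul_nonneg hw2' (by linarith : (0:ℝ) ≤ 2 - (x₁+y₁))]


lemma sum_rot3 {α β γ : Type*} [Fintype α] [Fintype β] [Fintype γ] (F : α → β → γ → ℂ) :
    ∑ i, ∑ k, ∑ l, F i k l = ∑ k, ∑ l, ∑ i, F i k l := by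
  rw [Finset.sum_comm]
  exact Finset.sum_congr rfl fun k _ => Finset.sum_comm

lemma schmidt {m n : ℕ} (x : Fin m × Fin n → ℂ) :
    ∃ (σ : Fin n → ℝ) (p : Fin n → Fin m → ℂ) (q : Fin n → Fin n → ℂ),
      (∀ a, 0 ≤ σ a) ∧
      (∀ a b, ∑ k, conj (q a k) * q b k = if a = b then 1 else 0) ∧
      (∀ a b, σ a ≠ 0 → σ b ≠ 0 → ∑ i, conj (p a i) * p b i = if a = b then 1 else 0) ∧
      (∀ i l, x (i, l) = ∑ a, (σ a : ℂ) * p a i * conj (q a l)) ∧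
      ((∑ a, σ a ^ 2) = ∑ pp, Complex.normSq (x pp)) := by
  classical
  set Xh : Matrix (Fin n) (Fin n) ℂ := Matrix.of fun k l => ∑ i, conj (x (i,k)) * x (i,l) with hXh
  have hherm : Xh.IsHermitian := by
    refine Matrix.IsHermitian.ext fun k l => ?_
    simp only [hXh, Matrix.of_apply, star_sum, star_mul', RCLike.star_def, Complex.conj_conj]
    exact Finset.sum_congr rfl fun i _ => mul_comm _ _
  have hpsd : Xh.PosSemidef := by
    refine Matrix.PosSemidef.of_dotProduct_mulVec_nonneg hherm fun y => ?_
    have hcalc : dotProduct (star y) (Xh.mulVec y)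
        = ∑ i, conj (∑ k, x (i,k) * y k) * (∑ k, x (i,k) * y k) := by
      calc dotProduct (star y) (Xh.mulVec y)
          = ∑ k, ∑ l, conj (y k) * (Xh k l * y l) := by
            simp only [dotProduct, Matrix.mulVec, Pi.star_apply, RCLike.star_def,
              Finset.mul_sum]
        _ = ∑ k, ∑ l, ∑ i, conj (y k) * (conj (x (i,k)) * x (i,l)) * y l := by
            refine Finset.sum_congr rfl fun k _ => Finset.sum_congr rfl fun l _ => ?_
            rw [hXh]
            simp only [Matrix.of_apply, Finset.sum_mul, Finset.mul_sum]
            exact Finset.sum_congr rfl fun i _ => by ring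
        _ = ∑ i, ∑ k, ∑ l, conj (y k) * (conj (x (i,k)) * x (i,l)) * y l := (sum_rot3 _).symm
        _ = _ := by
            refine Finset.sum_congr rfl fun i _ => ?_
            rw [_root_.map_sum, Finset.sum_mul_sum]
            simp only [_root_.map_mul]
            exact Finset.sum_congr rfl fun k _ => Finset.sum_congr rfl fun l _ => by ring
    rw [hcalc]
    have h2 : ∀ i : Fin m, conj (∑ k, x (i,k) * y k) * (∑ k, x (i,k) * y k)
        = ((Complex.normSq (∑ k, x (i,k) * y k) : ℝ) : ℂ) := fun i =>
      (Complex.normSq_eq_conj_mul_self).symm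
    rw [Finset.sum_congr rfl fun i _ => h2 i, ← Complex.ofReal_sum]
    exact Complex.zero_le_real.mpr (Finset.sum_nonneg fun i _ => Complex.normSq_nonneg _)
  set μ : Fin n → ℝ := hherm.eigenvalues with hμ
  have hμ0 : ∀ a, 0 ≤ μ a := fun a => hpsd.eigenvalues_nonneg a
  set q : Fin n → Fin n → ℂ := fun a => ⇑(hherm.eigenvectorBasis a) with hq
  have hqon : ∀ a b, ∑ k, conj (q a k) * q b k = if a = b then 1 else 0 := by
    intro a b
    have := (orthonormal_iff_ite.mp hherm.eigenvectorBasis.orthonormal) a b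
    rw [PiLp.inner_apply] at this
    simp only [RCLike.inner_apply'] at this
    exact this
  have hqcomplete : ∀ k l, ∑ a, q a k * conj (q a l) = if k = l then 1 else 0 := by
    intro k l
    have hU := (Matrix.mem_unitaryGroup_iff).mp (hherm.eigenvectorUnitary).2
    have h := congr_fun (congr_fun hU k) l
    rw [Matrix.mul_apply] at h
    simp only [Matrix.star_apply, Matrix.IsHermitian.eigenvectorUnitary_apply, RCLike.star_def,
      Matrix.one_apply] at h
    simpa only [hq] using h
  have heig : ∀ a k, ∑ l, Xh k l * q a l = (μ a : ℂ) * q a k := by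
    intro a k
    have := congr_fun (hherm.mulVec_eigenvectorBasis a) k
    rw [Matrix.mulVec] at this
    simpa [dotProduct, Pi.smul_apply, Complex.real_smul] using this
  set y : Fin n → Fin m → ℂ := fun a i => ∑ k, x (i,k) * q a k with hy
  have hyexp : ∀ a b (i : Fin m), conj (y a i) * y b i
      = ∑ k, ∑ l, conj (q a k) * ((conj (x (i,k)) * x (i,l)) * q b l) := by
    intro a b i
    simp only [hy]
    rw [_root_.map_sum, Finset.sum_mul_sum]
    simp only [_root_.map_mul]
    exact Finset.sum_congr rfl fun k _ => Finset.sum_congr rfl fun l _ => by ring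
  have hyy : ∀ a b, ∑ i, conj (y a i) * y b i = (μ b : ℂ) * (if a = b then 1 else 0) := by
    intro a b
    calc ∑ i, conj (y a i) * y b i
        = ∑ i, ∑ k, ∑ l, conj (q a k) * ((conj (x (i,k)) * x (i,l)) * q b l) :=
          Finset.sum_congr rfl fun i _ => hyexp a b i
      _ = ∑ k, ∑ l, ∑ i, conj (q a k) * ((conj (x (i,k)) * x (i,l)) * q b l) := sum_rot3 _
      _ = ∑ k, conj (q a k) * (∑ l, Xh k l * q b l) := by
          refine Finset.sum_congr rfl fun k _ => ?_
          rw [Finset.mul_sum]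
          refine Finset.sum_congr rfl fun l _ => ?_
          rw [hXh]
          simp only [Matrix.of_apply, Finset.sum_mul, Finset.mul_sum]
          try exact Finset.sum_congr rfl fun i _ => by ring
      _ = ∑ k, conj (q a k) * ((μ b : ℂ) * q b k) :=
          Finset.sum_congr rfl fun k _ => by rw [heig b k]
      _ = (μ b : ℂ) * ∑ k, conj (q a k) * q b k := by
          rw [Finset.mul_sum]
          exact Finset.sum_congr rfl fun k _ => by ring
      _ = _ := by rw [hqon a b]
  have hrecon_y : ∀ i l, x (i, l) = ∑ a, y a i * conj (q a l) := by
    intro i l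
    calc x (i, l) = ∑ k, x (i,k) * (if k = l then 1 else 0) := by simp
      _ = ∑ k, x (i,k) * ∑ a, q a k * conj (q a l) :=
          Finset.sum_congr rfl fun k _ => by rw [hqcomplete k l]
      _ = ∑ k, ∑ a, x (i,k) * (q a k * conj (q a l)) :=
          Finset.sum_congr rfl fun k _ => by rw [Finset.mul_sum]
      _ = ∑ a, ∑ k, x (i,k) * (q a k * conj (q a l)) := Finset.sum_comm
      _ = _ := by
          refine Finset.sum_congr rfl fun a _ => ?_
          simp only [hy, Finset.sum_mul]
          exact Finset.sum_congr rfl fun k _ => by ring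
  set σ : Fin n → ℝ := fun a => Real.sqrt (μ a) with hσ
  have hσ0 : ∀ a, 0 ≤ σ a := fun a => Real.sqrt_nonneg _
  have hσsq : ∀ a, σ a ^ 2 = μ a := fun a => Real.sq_sqrt (hμ0 a)
  set p : Fin n → Fin m → ℂ := fun a i => if σ a = 0 then 0 else (σ a : ℂ)⁻¹ * y a i with hp
  have hyzero : ∀ a, σ a = 0 → ∀ i, y a i = 0 := by
    intro a ha i
    have hμa : μ a = 0 := by
      have := hσsq a
      rw [ha] at this
      simpa using this.symm
    have h := hyy a a
    rw [hμa, if_pos rfl, mul_one] at h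
    simp only [Complex.ofReal_zero] at h
    have h0 : ∑ i, Complex.normSq (y a i) = 0 := by
      have h2 : ((∑ i, Complex.normSq (y a i) : ℝ) : ℂ) = 0 := by
        rw [Complex.ofReal_sum,
          Finset.sum_congr rfl fun i (_ : i ∈ Finset.univ) =>
            (Complex.normSq_eq_conj_mul_self (z := y a i))]
        exact h
      exact_mod_cast h2
    have := (Finset.sum_eq_zero_iff_of_nonneg (fun i _ => Complex.normSq_nonneg (y a i))).mp h0
      i (Finset.mem_univ i)
    exact Complex.normSq_eq_zero.mp this
  refine ⟨σ, p, q, hσ0, hqon, ?_, ?_, ?_⟩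
  · intro a b ha hb
    have hya : ∀ i, p a i = (σ a : ℂ)⁻¹ * y a i := fun i => by rw [hp]; simp [ha]
    have hyb : ∀ i, p b i = (σ b : ℂ)⁻¹ * y b i := fun i => by rw [hp]; simp [hb]
    have hstep : ∑ i, conj (p a i) * p b i
        = conj ((σ a : ℂ)⁻¹) * ((σ b : ℂ)⁻¹ * ∑ i, conj (y a i) * y b i) := by
      rw [Finset.mul_sum, Finset.mul_sum]
      exact Finset.sum_congr rfl fun i _ => by rw [hya, hyb, _root_.map_mul]; ring
    rw [hstep, hyy a b]
    have hconjinv : conj ((σ a : ℂ)⁻¹) = ((σ a : ℂ))⁻¹ := by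
      rw [_root_.map_inv₀, Complex.conj_ofReal]
    by_cases hab : a = b
    · subst hab
      rw [if_pos rfl, mul_one, hconjinv]
      have hσa : (σ a : ℂ) ≠ 0 := by exact_mod_cast ha
      have hμc : ((μ a : ℝ) : ℂ) = (σ a : ℂ) * (σ a : ℂ) := by
        norm_cast
        rw [← hσsq a]; ring
      rw [hμc]
      field_simp
    · rw [if_neg hab]
      simp
  · intro i l
    rw [hrecon_y i l]
    refine Finset.sum_congr rfl fun a _ => ?_
    by_cases ha : σ a = 0
    · simp [hp, ha, hyzero a ha i]
    · simp only [hp, if_neg ha]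
      have hσa : (σ a : ℂ) ≠ 0 := by exact_mod_cast ha
      field_simp
  · have hsum : ((∑ a, μ a : ℝ) : ℂ) = ((∑ pp, Complex.normSq (x pp) : ℝ) : ℂ) := by
      calc ((∑ a, μ a : ℝ) : ℂ) = ∑ a, ((μ a : ℝ) : ℂ) := by push_cast; rfl
        _ = ∑ a, ∑ i, conj (y a i) * y a i := by
            refine Finset.sum_congr rfl fun a _ => ?_
            have := hyy a a
            rw [if_pos rfl, mul_one] at this
            exact this.symm
        _ = ∑ a, ∑ i, ∑ k, ∑ l, conj (q a k) * ((conj (x (i,k)) * x (i,l)) * q a l) :=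
            Finset.sum_congr rfl fun a _ => Finset.sum_congr rfl fun i _ => hyexp a a i
        _ = ∑ i, ∑ a, ∑ k, ∑ l, conj (q a k) * ((conj (x (i,k)) * x (i,l)) * q a l) :=
            Finset.sum_comm
        _ = ∑ i, ∑ k, ∑ l, ∑ a, conj (q a k) * ((conj (x (i,k)) * x (i,l)) * q a l) :=
            Finset.sum_congr rfl fun i _ => sum_rot3 _
        _ = ∑ i, ∑ k, ∑ l, (conj (x (i,k)) * x (i,l)) * (if l = k then 1 else 0) := by
            refine Finset.sum_congr rfl fun i _ => Finset.sum_congr rfl fun k _ =>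
              Finset.sum_congr rfl fun l _ => ?_
            rw [← hqcomplete l k, Finset.mul_sum]
            exact Finset.sum_congr rfl fun a _ => by ring
        _ = ∑ i, ∑ k, conj (x (i,k)) * x (i,k) := by
            refine Finset.sum_congr rfl fun i _ => Finset.sum_congr rfl fun k _ => ?_
            simp
        _ = ∑ pp : Fin m × Fin n, conj (x pp) * x pp := by rw [Fintype.sum_prod_type]
        _ = _ := by
            rw [Complex.ofReal_sum]
            exact Finset.sum_congr rfl fun pp _ =>
              (Complex.normSq_eq_conj_mul_self (z := x pp)).symm
    have h : (∑ a, μ a : ℝ) = ∑ pp, Complex.normSq (x pp) := by exact_mod_cast hsum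
    rw [← h]
    exact Finset.sum_congr rfl fun a _ => hσsq a


lemma residual_inner {ι κ : Type*} [Fintype ι] [DecidableEq κ]
    (F : Finset κ) (u : κ → ι → ℂ)
    (hu : ∀ a ∈ F, ∀ b ∈ F, ∑ z, conj (u a z) * u b z = if a = b then 1 else 0)
    (v w : ι → ℂ) :
    ∑ z, conj (v z - ∑ a ∈ F, (∑ z', conj (u a z') * v z') * u a z)
        * (w z - ∑ a ∈ F, (∑ z', conj (u a z') * w z') * u a z)
      = (∑ z, conj (v z) * w z)
        - ∑ a ∈ F, conj (∑ z', conj (u a z') * v z') * (∑ z', conj (u a z') * w z') := by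
  set c : κ → ℂ := fun a => ∑ z', conj (u a z') * v z' with hc
  set d : κ → ℂ := fun a => ∑ z', conj (u a z') * w z' with hd
  have hconjc : ∀ a, conj (c a) = ∑ z, u a z * conj (v z) := by
    intro a
    rw [hc]
    simp only [_root_.map_sum, _root_.map_mul, Complex.conj_conj]
  have expand : ∀ z, conj (v z - ∑ a ∈ F, c a * u a z) * (w z - ∑ a ∈ F, d a * u a z)
      = conj (v z) * w z
        - (∑ a ∈ F, d a * (conj (v z) * u a z))
        - (∑ a ∈ F, conj (c a) * (conj (u a z) * w z))
        + ∑ a ∈ F, ∑ b ∈ F, (conj (c a) * d b) * (conj (u a z) * u b z) := by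
    intro z
    rw [_root_.map_sub, _root_.map_sum, sub_mul, mul_sub, mul_sub]
    have e1 : conj (v z) * ∑ a ∈ F, d a * u a z = ∑ a ∈ F, d a * (conj (v z) * u a z) := by
      rw [Finset.mul_sum]
      exact Finset.sum_congr rfl fun a _ => by ring
    have e2 : (∑ a ∈ F, conj (c a * u a z)) * w z
        = ∑ a ∈ F, conj (c a) * (conj (u a z) * w z) := by
      rw [Finset.sum_mul]
      refine Finset.sum_congr rfl fun a _ => by rw [_root_.map_mul]; ring
    have e3 : (∑ a ∈ F, conj (c a * u a z)) * ∑ b ∈ F, d b * u b z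
        = ∑ a ∈ F, ∑ b ∈ F, (conj (c a) * d b) * (conj (u a z) * u b z) := by
      rw [Finset.sum_mul_sum]
      refine Finset.sum_congr rfl fun a _ => Finset.sum_congr rfl fun b _ => by
        rw [_root_.map_mul]; ring
    rw [e1, e2, e3]
    ring
  rw [Finset.sum_congr rfl fun z _ => expand z]
  rw [Finset.sum_add_distrib, Finset.sum_sub_distrib, Finset.sum_sub_distrib]
  have t2 : ∑ z, ∑ a ∈ F, d a * (conj (v z) * u a z) = ∑ a ∈ F, d a * conj (c a) := by
    rw [Finset.sum_comm]
    refine Finset.sum_congr rfl fun a _ => ?_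
    rw [← Finset.mul_sum, hconjc a]
    congr 1
    exact Finset.sum_congr rfl fun z _ => by ring
  have t3 : ∑ z, ∑ a ∈ F, conj (c a) * (conj (u a z) * w z) = ∑ a ∈ F, conj (c a) * d a := by
    rw [Finset.sum_comm]
    refine Finset.sum_congr rfl fun a _ => ?_
    rw [← Finset.mul_sum, hd]
  have t4 : ∑ z, ∑ a ∈ F, ∑ b ∈ F, (conj (c a) * d b) * (conj (u a z) * u b z)
      = ∑ a ∈ F, conj (c a) * d a := by
    rw [Finset.sum_comm]
    refine Finset.sum_congr rfl fun a ha => ?_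
    rw [Finset.sum_comm]
    have hstep : ∀ b ∈ F, ∑ z, (conj (c a) * d b) * (conj (u a z) * u b z)
        = (conj (c a) * d b) * (if a = b then 1 else 0) := by
      intro b hb
      rw [← Finset.mul_sum, hu a ha b hb]
    rw [Finset.sum_congr rfl hstep]
    simp only [mul_ite, mul_one, mul_zero]
    rw [Finset.sum_ite_eq F a (fun b => conj (c a) * d b)]
    simp [ha]
  rw [t2, t3, t4]
  have : ∑ a ∈ F, d a * conj (c a) = ∑ a ∈ F, conj (c a) * d a :=
    Finset.sum_congr rfl fun a _ => mul_comm _ _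
  rw [this]
  ring


lemma sum_pair_split {M : Type*} [AddCommMonoid M] {n : ℕ} (T : Finset (Fin n)) (F : Fin n → Fin n → M) :
    ∑ ab ∈ T ×ˢ T, F ab.1 ab.2
      = (∑ a ∈ T, F a a)
        + ∑ ab ∈ (T ×ˢ T).filter (fun ab => ab.1 < ab.2), (F ab.1 ab.2 + F ab.2 ab.1) := by
  classical
  have h1 := Finset.sum_filter_add_sum_filter_not (T ×ˢ T) (fun ab => ab.1 < ab.2)
    (fun ab => F ab.1 ab.2)
  have h2 := Finset.sum_filter_add_sum_filter_not ((T ×ˢ T).filter (fun ab => ¬ ab.1 < ab.2))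
    (fun ab => ab.2 < ab.1) (fun ab => F ab.1 ab.2)
  have e1 : ((T ×ˢ T).filter (fun ab => ¬ ab.1 < ab.2)).filter (fun ab => ab.2 < ab.1)
      = (T ×ˢ T).filter (fun ab => ab.2 < ab.1) := by
    rw [Finset.filter_filter]
    apply Finset.filter_congr
    intro ab _
    constructor
    · rintro ⟨_, h⟩; exact h
    · intro h; exact ⟨not_lt_of_gt h, h⟩
  have e2 : ((T ×ˢ T).filter (fun ab => ¬ ab.1 < ab.2)).filter (fun ab => ¬ ab.2 < ab.1)
      = (T ×ˢ T).filter (fun ab => ab.1 = ab.2) := by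
    rw [Finset.filter_filter]
    apply Finset.filter_congr
    intro ab _
    constructor
    · rintro ⟨h1', h2'⟩
      exact le_antisymm (not_lt.mp h2') (not_lt.mp h1')
    · intro h; exact ⟨by rw [h]; exact lt_irrefl _, by rw [h]; exact lt_irrefl _⟩
  have e3 : ∑ ab ∈ (T ×ˢ T).filter (fun ab => ab.1 = ab.2), F ab.1 ab.2 = ∑ a ∈ T, F a a := by
    refine Finset.sum_nbij' (fun ab => ab.1) (fun a => (a, a)) ?_ ?_ ?_ ?_ ?_
    · intro ab hab
      simp only [Finset.mem_filter, Finset.mem_product] at hab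
      exact hab.1.1
    · intro a ha
      simp only [Finset.mem_filter, Finset.mem_product]
      exact ⟨⟨ha, ha⟩, trivial⟩
    · intro ab hab
      simp only [Finset.mem_filter, Finset.mem_product] at hab
      exact Prod.ext rfl hab.2
    · intro a _; rfl
    · intro ab hab
      simp only [Finset.mem_filter, Finset.mem_product] at hab
      show F ab.1 ab.2 = F ab.1 ab.1
      rw [hab.2]
  have e4 : ∑ ab ∈ (T ×ˢ T).filter (fun ab => ab.2 < ab.1), F ab.1 ab.2
      = ∑ ab ∈ (T ×ˢ T).filter (fun ab => ab.1 < ab.2), F ab.2 ab.1 := by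
    refine Finset.sum_nbij' (fun ab => (ab.2, ab.1)) (fun ab => (ab.2, ab.1)) ?_ ?_ ?_ ?_ ?_
    · intro ab hab
      simp only [Finset.mem_filter, Finset.mem_product] at hab ⊢
      exact ⟨⟨hab.1.2, hab.1.1⟩, hab.2⟩
    · intro ab hab
      simp only [Finset.mem_filter, Finset.mem_product] at hab ⊢
      exact ⟨⟨hab.1.2, hab.1.1⟩, hab.2⟩
    · intro ab _; rfl
    · intro ab _; rfl
    · intro ab _; rfl
  rw [← h1, ← h2, e1, e2, e3, e4, Finset.sum_add_distrib]
  abel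

lemma three_ineq {u v w S : ℝ} (hu : 0 ≤ u) (hv : 0 ≤ v) (hw : 0 ≤ w)
    (h : u^2+v^2+w^2 ≤ S) : u*v + u*w ≤ Real.sqrt 2/2*S := by
  have hs : Real.sqrt 2 * Real.sqrt 2 = 2 := Real.mul_self_sqrt (by norm_num)
  have step1 : Real.sqrt 2 * (u*v + u*w) ≤ S := by
    nlinarith [sq_nonneg (Real.sqrt 2*u - v - w), sq_nonneg (v-w)]
  have step2 := mul_le_mul_of_nonneg_left step1 (Real.sqrt_nonneg 2)
  rw [← mul_assoc, hs] at step2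
  linarith

lemma four_ineq {u v w z S : ℝ} (h : u^2+v^2+w^2+z^2 ≤ S) :
    u*v + w*z ≤ Real.sqrt 2/2*S := by
  have h1 : u*v + w*z ≤ S/2 := by nlinarith [sq_nonneg (u-v), sq_nonneg (w-z)]
  have hS : 0 ≤ S := by nlinarith [sq_nonneg u, sq_nonneg v, sq_nonneg w, sq_nonneg z]
  nlinarith [one_le_sqrt_two]

lemma weight_single {n : ℕ} {σ : Fin n → ℝ} (hσ0 : ∀ a, 0 ≤ σ a) {T : Finset (Fin n)}
    {a b : Fin n} (ha : a ∈ T) (hb : b ∈ T) (hab : a < b) :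
    σ a * σ b ≤ (∑ e ∈ T, σ e ^ 2) / 2 := by
  have hsub : ({a, b} : Finset (Fin n)) ⊆ T := by
    intro x hx
    simp only [Finset.mem_insert, Finset.mem_singleton] at hx
    rcases hx with rfl | rfl <;> assumption
  have hsum : σ a ^ 2 + σ b ^ 2 ≤ ∑ e ∈ T, σ e ^ 2 := by
    have hpair : ∑ e ∈ ({a, b} : Finset (Fin n)), σ e ^ 2 = σ a ^ 2 + σ b ^ 2 :=
      Finset.sum_pair (ne_of_lt hab)
    exact le_trans (le_of_eq hpair.symm)
      (Finset.sum_le_sum_of_subset_of_nonneg hsub (fun i _ _ => sq_nonneg _))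
  nlinarith [sq_nonneg (σ a - σ b)]

lemma weight_pair {n : ℕ} {σ : Fin n → ℝ} (hσ0 : ∀ a, 0 ≤ σ a) {T : Finset (Fin n)}
    {a b c d : Fin n} (ha : a ∈ T) (hb : b ∈ T) (hc : c ∈ T) (hd : d ∈ T)
    (hab : a < b) (hcd : c < d) (hne : (a,b) ≠ (c,d)) :
    σ a * σ b + σ c * σ d ≤ Real.sqrt 2 / 2 * ∑ e ∈ T, σ e ^ 2 := by
  classical
  have hsub3 : ∀ (x y z : Fin n), x ∈ T → y ∈ T → z ∈ T → x ≠ y → x ≠ z → y ≠ z →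
      σ x ^2 + σ y ^2 + σ z ^2 ≤ ∑ e ∈ T, σ e ^ 2 := by
    intro x y z hx hy hz hxy hxz hyz
    have hsub : ({x, y, z} : Finset (Fin n)) ⊆ T := by
      intro e he
      simp only [Finset.mem_insert, Finset.mem_singleton] at he
      rcases he with rfl | rfl | rfl <;> assumption
    have : ∑ e ∈ ({x, y, z} : Finset (Fin n)), σ e ^ 2 = σ x ^2 + σ y ^2 + σ z ^2 := by
      rw [Finset.sum_insert (by simp [hxy, hxz]), Finset.sum_pair hyz]
      ring
    rw [← this]
    exact Finset.sum_le_sum_of_subset_of_nonneg hsub (fun i _ _ => sq_nonneg _)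
  by_cases hac : a = c
  · -- shared first index, b ≠ d
    subst hac
    have hbd : b ≠ d := fun h => hne (by rw [h])
    have h3 := hsub3 a b d ha hb hd (ne_of_lt hab) (ne_of_lt hcd) hbd
    exact three_ineq (hσ0 a) (hσ0 b) (hσ0 d) h3
  by_cases hbd : b = d
  · -- shared second index, a ≠ c
    subst hbd
    have h3 := hsub3 b a c hb ha hc (ne_of_gt hab) (ne_of_gt hcd) hac
    have := three_ineq (hσ0 b) (hσ0 a) (hσ0 c) h3
    linarith [this]
  by_cases hbc : b = c
  · -- a < b = c < d
    subst hbc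
    have h3 := hsub3 b a d hb ha hd (ne_of_gt hab) (ne_of_lt hcd) (ne_of_lt (hab.trans hcd))
    have := three_ineq (hσ0 b) (hσ0 a) (hσ0 d) h3
    linarith [this]
  by_cases had : a = d
  · -- c < d = a < b
    subst had
    have h3 := hsub3 a b c ha hb hc (ne_of_lt hab) (ne_of_gt hcd) (ne_of_gt (hcd.trans hab))
    have := three_ineq (hσ0 a) (hσ0 b) (hσ0 c) h3
    linarith [this]
  · -- all distinct
    have hsub : ({a, b} : Finset (Fin n)) ∪ {c, d} ⊆ T := by
      intro e he
      simp only [Finset.mem_union, Finset.mem_insert, Finset.mem_singleton] at he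
      rcases he with (rfl | rfl) | (rfl | rfl) <;> assumption
    have hdisj : Disjoint ({a, b} : Finset (Fin n)) {c, d} := by
      simp only [Finset.disjoint_left, Finset.mem_insert, Finset.mem_singleton]
      rintro e (rfl | rfl) he <;> rcases he with rfl | rfl <;> simp_all
    have hsum4 : σ a ^2 + σ b ^2 + (σ c ^2 + σ d ^2) ≤ ∑ e ∈ T, σ e ^ 2 := by
      have := Finset.sum_le_sum_of_subset_of_nonneg hsub (fun i _ _ => sq_nonneg (σ i))
      rwa [Finset.sum_union hdisj, Finset.sum_pair (ne_of_lt hab),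
        Finset.sum_pair (ne_of_lt hcd)] at this
    exact four_ineq (by linarith)
lemma sqrt2C_sq : ((Real.sqrt 2 : ℝ) : ℂ) * ((Real.sqrt 2 : ℝ) : ℂ) = 2 := by
  norm_cast
  rw [Real.mul_self_sqrt (by norm_num : (0:ℝ) ≤ 2)]

lemma sqrt2C_ne : ((Real.sqrt 2 : ℝ) : ℂ) ≠ 0 := by
  simp only [ne_eq, Complex.ofReal_eq_zero]
  positivity

lemma nsq_sqrt2C : Complex.normSq ((Real.sqrt 2 : ℝ) : ℂ) = 2 := by
  rw [Complex.normSq_ofReal, Real.mul_self_sqrt (by norm_num : (0:ℝ) ≤ 2)]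

lemma pair_re (A B : ℂ) : (A * conj B).re + (B * conj A).re
    = Complex.normSq ((A+B)/((Real.sqrt 2:ℝ):ℂ)) - Complex.normSq ((A-B)/((Real.sqrt 2:ℝ):ℂ)) := by
  rw [_root_.map_div₀ Complex.normSq, _root_.map_div₀ Complex.normSq, nsq_sqrt2C, Complex.normSq_add,
    Complex.normSq_sub]
  have : (B * conj A).re = (A * conj B).re := by
    rw [show B * conj A = conj (A * conj B) by rw [_root_.map_mul, Complex.conj_conj]; ring]
    exact Complex.conj_re _
  rw [this]
  ring

lemma pair_nsq (A B : ℂ) : Complex.normSq A + Complex.normSq B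
    = Complex.normSq ((A+B)/((Real.sqrt 2:ℝ):ℂ)) + Complex.normSq ((A-B)/((Real.sqrt 2:ℝ):ℂ)) := by
  rw [_root_.map_div₀ Complex.normSq, _root_.map_div₀ Complex.normSq, nsq_sqrt2C, Complex.normSq_add,
    Complex.normSq_sub]
  ring

lemma pair_inner (A B C D : ℂ) : conj A * C + conj B * D
    = conj ((A+B)/((Real.sqrt 2:ℝ):ℂ)) * ((C+D)/((Real.sqrt 2:ℝ):ℂ))
      + conj ((A-B)/((Real.sqrt 2:ℝ):ℂ)) * ((C-D)/((Real.sqrt 2:ℝ):ℂ)) := by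
  rw [_root_.map_div₀, _root_.map_div₀, Complex.conj_ofReal, _root_.map_add, _root_.map_sub]
  rw [div_mul_div_comm, div_mul_div_comm, ← add_div, sqrt2C_sq]
  rw [eq_div_iff (by norm_num : (2:ℂ) ≠ 0)]
  ring


noncomputable def fB {m n : ℕ} (x v : Fin m × Fin n → ℂ) : ℂ :=
  ∑ k : Fin n, ∑ l : Fin n, (∑ i, conj (x (i,k)) * conj (v (i,l)))
    * conj (∑ i, conj (x (i,l)) * conj (v (i,k)))

set_option maxHeartbeats 2000000 in
lemma core {m n : ℕ} (x v w : Fin m × Fin n → ℂ)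
    (hv : ∑ z, conj (v z) * v z = 1)
    (hw : ∑ z, conj (w z) * w z = 1)
    (hvw : ∑ z, conj (v z) * w z = 0) :
    -(Real.sqrt 2 / 2 * ∑ z, Complex.normSq (x z)) ≤ (fB x v).re + (fB x w).re := by
  classical
  obtain ⟨σ, p, q, hσ0, hqon, hpon, hrecon, htr⟩ := schmidt x
  set T : Finset (Fin n) := Finset.univ.filter (fun a => σ a ≠ 0) with hT
  have hmemT : ∀ a, a ∈ T ↔ σ a ≠ 0 := by
    intro a; rw [hT]; simp
  set G : Fin n → Fin n → ℂ := fun a b => ∑ k, ∑ i, q a k * p b i * v (i, k) with hG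
  set H : Fin n → Fin n → ℂ := fun a b => ∑ k, ∑ i, q a k * p b i * w (i, k) with hH
  -- expansion of fB
  have hconjx : ∀ i k, conj (x (i,k)) = ∑ a, (σ a : ℂ) * conj (p a i) * q a k := by
    intro i k
    rw [hrecon i k]
    simp only [_root_.map_sum, _root_.map_mul, Complex.conj_ofReal, Complex.conj_conj]
  have hexp : ∀ (v' : Fin m × Fin n → ℂ),
      fB x v' = ∑ a, ∑ b, ((σ a : ℂ) * (σ b : ℂ)) *
        ((∑ k, ∑ i, q a k * p b i * v' (i, k)) * conj (∑ k, ∑ i, q b k * p a i * v' (i, k))) := by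
    intro v'
    have hB : ∀ k l, (∑ i, conj (x (i,k)) * conj (v' (i,l)))
        = ∑ a, (σ a : ℂ) * q a k * conj (∑ i, p a i * v' (i, l)) := by
      intro k l
      calc ∑ i, conj (x (i,k)) * conj (v' (i,l))
          = ∑ i, ∑ a, ((σ a : ℂ) * conj (p a i) * q a k) * conj (v' (i,l)) := by
            refine Finset.sum_congr rfl fun i _ => ?_
            rw [hconjx i k, Finset.sum_mul]
        _ = ∑ a, ∑ i, ((σ a : ℂ) * conj (p a i) * q a k) * conj (v' (i,l)) := Finset.sum_comm
        _ = _ := by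
            refine Finset.sum_congr rfl fun a _ => ?_
            rw [_root_.map_sum, Finset.mul_sum]
            refine Finset.sum_congr rfl fun i _ => ?_
            rw [_root_.map_mul]
            ring
    calc fB x v'
        = ∑ k, ∑ l, (∑ a, (σ a : ℂ) * q a k * conj (∑ i, p a i * v' (i, l)))
            * conj (∑ b, (σ b : ℂ) * q b l * conj (∑ i, p b i * v' (i, k))) := by
          have hfB : fB x v' = ∑ k : Fin n, ∑ l : Fin n, (∑ i, conj (x (i,k)) * conj (v' (i,l)))
              * conj (∑ i, conj (x (i,l)) * conj (v' (i,k))) := rfl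
          rw [hfB]
          refine Finset.sum_congr rfl fun k _ => Finset.sum_congr rfl fun l _ => ?_
          rw [hB k l, hB l k]
      _ = ∑ k, ∑ l, ∑ a, ∑ b, ((σ a : ℂ) * q a k * conj (∑ i, p a i * v' (i, l)))
            * ((σ b : ℂ) * conj (q b l) * (∑ i, p b i * v' (i, k))) := by
          refine Finset.sum_congr rfl fun k _ => Finset.sum_congr rfl fun l _ => ?_
          rw [_root_.map_sum, Finset.sum_mul_sum]
          refine Finset.sum_congr rfl fun a _ => Finset.sum_congr rfl fun b _ => ?_
          rw [_root_.map_mul, _root_.map_mul, Complex.conj_conj, Complex.conj_ofReal]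
      _ = ∑ a, ∑ b, ∑ k, ∑ l, ((σ a : ℂ) * q a k * conj (∑ i, p a i * v' (i, l)))
            * ((σ b : ℂ) * conj (q b l) * (∑ i, p b i * v' (i, k))) := by
          calc ∑ k, ∑ l, ∑ a, ∑ b, ((σ a : ℂ) * q a k * conj (∑ i, p a i * v' (i, l)))
              * ((σ b : ℂ) * conj (q b l) * (∑ i, p b i * v' (i, k)))
              = ∑ k, ∑ a, ∑ l, ∑ b, ((σ a : ℂ) * q a k * conj (∑ i, p a i * v' (i, l)))
              * ((σ b : ℂ) * conj (q b l) * (∑ i, p b i * v' (i, k))) :=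
                Finset.sum_congr rfl fun k _ => Finset.sum_comm
            _ = ∑ a, ∑ k, ∑ l, ∑ b, _ := Finset.sum_comm
            _ = ∑ a, ∑ b, ∑ k, ∑ l, _ :=
                Finset.sum_congr rfl fun a _ => (sum_rot3 _).symm
      _ = _ := by
          refine Finset.sum_congr rfl fun a _ => Finset.sum_congr rfl fun b _ => ?_
          have e1 : ∀ (c d : Fin n), (∑ k, ∑ i, q c k * p d i * v' (i,k))
              = ∑ k, q c k * (∑ i, p d i * v' (i,k)) := by
            intro c d
            refine Finset.sum_congr rfl fun k _ => ?_
            rw [Finset.mul_sum]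
            exact Finset.sum_congr rfl fun i _ => by ring
          rw [e1 a b, e1 b a]
          conv_rhs => rw [_root_.map_sum, Finset.sum_mul_sum, Finset.mul_sum]
          refine Finset.sum_congr rfl fun k _ => ?_
          conv_rhs => rw [Finset.mul_sum]
          refine Finset.sum_congr rfl fun l _ => ?_
          rw [_root_.map_mul]
          ring
  -- continuation
  -- abbreviation for the G-matrices
  set GG : (Fin m × Fin n → ℂ) → Fin n → Fin n → ℂ :=
    fun v' a b => ∑ k, ∑ i, q a k * p b i * v' (i, k) with hGG
  -- restriction to T ×ˢ T
  have hrestrict : ∀ (v' : Fin m × Fin n → ℂ),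
      (∑ a, ∑ b, ((σ a : ℂ) * (σ b : ℂ)) * (GG v' a b * conj (GG v' b a)))
        = ∑ ab ∈ T ×ˢ T, ((σ ab.1 : ℂ) * (σ ab.2 : ℂ))
            * (GG v' ab.1 ab.2 * conj (GG v' ab.2 ab.1)) := by
    intro v'
    rw [← Finset.sum_product']
    symm
    apply Finset.sum_subset
    · intro ab _
      exact Finset.mem_product.mpr ⟨Finset.mem_univ _, Finset.mem_univ _⟩
    · intro ab _ hnab
      have : σ ab.1 = 0 ∨ σ ab.2 = 0 := by
        by_contra hc
        push_neg at hc
        exact hnab (Finset.mem_product.mpr ⟨(hmemT _).mpr hc.1, (hmemT _).mpr hc.2⟩)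
      rcases this with h | h <;> simp [h]
  -- real parts
  have hre : ∀ (v' : Fin m × Fin n → ℂ), (fB x v').re
      = ∑ ab ∈ T ×ˢ T, σ ab.1 * σ ab.2 * (GG v' ab.1 ab.2 * conj (GG v' ab.2 ab.1)).re := by
    intro v'
    rw [hexp v', hrestrict v', Complex.re_sum]
    refine Finset.sum_congr rfl fun ab _ => ?_
    rw [← Complex.ofReal_mul, Complex.re_ofReal_mul]
  -- the orthonormal family u
  set u : (Fin n × Fin n) → (Fin m × Fin n) → ℂ := fun ab z => conj (q ab.1 z.2 * p ab.2 z.1)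
    with hu_def
  have hu : ∀ ab ∈ T ×ˢ T, ∀ cd ∈ T ×ˢ T,
      ∑ z, conj (u ab z) * u cd z = if ab = cd then 1 else 0 := by
    intro ab hab cd hcd
    obtain ⟨ha1, ha2⟩ := Finset.mem_product.mp hab
    obtain ⟨hc1, hc2⟩ := Finset.mem_product.mp hcd
    have e2 : ∑ i, p ab.2 i * conj (p cd.2 i) = if ab.2 = cd.2 then 1 else 0 := by
      have h0 := hpon ab.2 cd.2 ((hmemT _).mp ha2) ((hmemT _).mp hc2)
      have h' := congrArg conj h0
      rw [_root_.map_sum, apply_ite conj] at h'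
      simp only [_root_.map_mul, Complex.conj_conj, _root_.map_one, _root_.map_zero] at h'
      exact h'
    have e3 : ∑ k, q ab.1 k * conj (q cd.1 k) = if ab.1 = cd.1 then 1 else 0 := by
      have h0 := hqon ab.1 cd.1
      have h' := congrArg conj h0
      rw [_root_.map_sum, apply_ite conj] at h'
      simp only [_root_.map_mul, Complex.conj_conj, _root_.map_one, _root_.map_zero] at h'
      exact h'
    have calc1 : ∑ z : Fin m × Fin n, conj (u ab z) * u cd z
        = (∑ i, p ab.2 i * conj (p cd.2 i)) * (∑ k, q ab.1 k * conj (q cd.1 k)) := by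
      rw [Fintype.sum_prod_type, Finset.sum_mul_sum]
      refine Finset.sum_congr rfl fun i _ => Finset.sum_congr rfl fun k _ => ?_
      simp only [hu_def, _root_.map_mul, Complex.conj_conj]
      ring
    rw [calc1, e2, e3]
    by_cases h1 : ab.1 = cd.1 <;> by_cases h2 : ab.2 = cd.2 <;>
      simp [Prod.ext_iff, h1, h2]
  have hcf : ∀ (v' : Fin m × Fin n → ℂ) (ab : Fin n × Fin n),
      (∑ z, conj (u ab z) * v' z) = GG v' ab.1 ab.2 := by
    intro v' ab
    rw [Fintype.sum_prod_type, Finset.sum_comm]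
    refine Finset.sum_congr rfl fun k _ => Finset.sum_congr rfl fun i _ => ?_
    simp only [hu_def, _root_.map_mul, Complex.conj_conj]
  -- residual facts
  set gV : ℝ := ∑ ab ∈ T ×ˢ T, Complex.normSq (GG v ab.1 ab.2) with hgV
  set gW : ℝ := ∑ ab ∈ T ×ˢ T, Complex.normSq (GG w ab.1 ab.2) with hgW
  have hGnsq : ∀ (v' : Fin m × Fin n → ℂ),
      (∑ ab ∈ T ×ˢ T, conj (∑ z', conj (u ab z') * v' z') * (∑ z', conj (u ab z') * v' z'))
        = ((∑ ab ∈ T ×ˢ T, Complex.normSq (GG v' ab.1 ab.2) : ℝ) : ℂ) := by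
    intro v'
    rw [Complex.ofReal_sum]
    refine Finset.sum_congr rfl fun ab _ => ?_
    rw [hcf v' ab]
    exact (Complex.normSq_eq_conj_mul_self).symm
  have hvv := residual_inner (T ×ˢ T) u hu v v
  have hww := residual_inner (T ×ˢ T) u hu w w
  have hvw' := residual_inner (T ×ˢ T) u hu v w
  rw [hv, hGnsq v] at hvv
  rw [hw, hGnsq w] at hww
  have hEq : ∑ ab ∈ T ×ˢ T, conj (∑ z', conj (u ab z') * v z') * (∑ z', conj (u ab z') * w z')
      = ∑ ab ∈ T ×ˢ T, conj (GG v ab.1 ab.2) * GG w ab.1 ab.2 :=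
    Finset.sum_congr rfl fun ab _ => by rw [hcf v ab, hcf w ab]
  rw [hvw, hEq] at hvw'
  -- re facts
  have hre_nonneg : ∀ (f : Fin m × Fin n → ℂ), 0 ≤ (∑ z, conj (f z) * f z).re := by
    intro f
    rw [Complex.re_sum]
    refine Finset.sum_nonneg fun z _ => ?_
    rw [← Complex.normSq_eq_conj_mul_self, Complex.ofReal_re]
    exact Complex.normSq_nonneg _
  have habs_pair : ∀ (f g : Fin m × Fin n → ℂ), ‖∑ z, conj (f z) * g z‖ ≤
      Real.sqrt ((∑ z, conj (f z) * f z).re) * Real.sqrt ((∑ z, conj (g z) * g z).re) := by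
    intro f g
    have e : ∀ (f : Fin m × Fin n → ℂ), (∑ z, conj (f z) * f z).re = ∑ z, Complex.normSq (f z) := by
      intro f
      rw [Complex.re_sum]
      refine Finset.sum_congr rfl fun z _ => ?_
      rw [← Complex.normSq_eq_conj_mul_self, Complex.ofReal_re]
    rw [e f, e g]
    exact abs_sum_conj_mul_le _ _ _
  have hgV1 : gV ≤ 1 := by
    have h0 := hre_nonneg (fun z => v z - ∑ ab ∈ T ×ˢ T, (∑ z', conj (u ab z') * v z') * u ab z)
    rw [hvv] at h0
    simp only [Complex.sub_re, Complex.one_re, Complex.ofReal_re] at h0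
    linarith
  have hgW1 : gW ≤ 1 := by
    have h0 := hre_nonneg (fun z => w z - ∑ ab ∈ T ×ˢ T, (∑ z', conj (u ab z') * w z') * u ab z)
    rw [hww] at h0
    simp only [Complex.sub_re, Complex.one_re, Complex.ofReal_re] at h0
    linarith
  have habsinner : ‖∑ ab ∈ T ×ˢ T, conj (GG v ab.1 ab.2) * GG w ab.1 ab.2‖
      ≤ Real.sqrt (1 - gV) * Real.sqrt (1 - gW) := by
    have h2 : ∑ ab ∈ T ×ˢ T, conj (GG v ab.1 ab.2) * GG w ab.1 ab.2
        = -(∑ z, conj (v z - ∑ ab ∈ T ×ˢ T, (∑ z', conj (u ab z') * v z') * u ab z)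
            * (w z - ∑ ab ∈ T ×ˢ T, (∑ z', conj (u ab z') * w z') * u ab z)) := by
      rw [hvw']
      ring
    rw [h2, norm_neg]
    refine (habs_pair _ _).trans ?_
    have ev : ((∑ z, conj (v z - ∑ ab ∈ T ×ˢ T, (∑ z', conj (u ab z') * v z') * u ab z)
        * (v z - ∑ ab ∈ T ×ˢ T, (∑ z', conj (u ab z') * v z') * u ab z)).re) = 1 - gV := by
      rw [hvv]
      simp [Complex.sub_re, hgV]
    have ew : ((∑ z, conj (w z - ∑ ab ∈ T ×ˢ T, (∑ z', conj (u ab z') * w z') * u ab z)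
        * (w z - ∑ ab ∈ T ×ˢ T, (∑ z', conj (u ab z') * w z') * u ab z)).re) = 1 - gW := by
      rw [hww]
      simp [Complex.sub_re, hgW]
    rw [ev, ew]
  -- final assembly
  set P : Finset (Fin n × Fin n) := (T ×ˢ T).filter (fun ab => ab.1 < ab.2) with hP
  have hmemP : ∀ pr, pr ∈ P → pr.1 ∈ T ∧ pr.2 ∈ T ∧ pr.1 < pr.2 := by
    intro pr hpr
    rw [hP, Finset.mem_filter, Finset.mem_product] at hpr
    exact ⟨hpr.1.1, hpr.1.2, hpr.2⟩
  set sG : Fin n × Fin n → ℂ :=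
    fun pr => (GG v pr.1 pr.2 + GG v pr.2 pr.1) / ((Real.sqrt 2:ℝ):ℂ) with hsGdef
  set tG : Fin n × Fin n → ℂ :=
    fun pr => (GG v pr.1 pr.2 - GG v pr.2 pr.1) / ((Real.sqrt 2:ℝ):ℂ) with htGdef
  set sH : Fin n × Fin n → ℂ :=
    fun pr => (GG w pr.1 pr.2 + GG w pr.2 pr.1) / ((Real.sqrt 2:ℝ):ℂ) with hsHdef
  set tH : Fin n × Fin n → ℂ :=
    fun pr => (GG w pr.1 pr.2 - GG w pr.2 pr.1) / ((Real.sqrt 2:ℝ):ℂ) with htHdef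
  set Z : ℝ := ∑ e ∈ T, σ e ^ 2 with hZdef
  have hZx : Z = ∑ z, Complex.normSq (x z) := by
    rw [hZdef, ← htr]
    apply Finset.sum_subset (Finset.subset_univ T)
    intro a _ ha
    have : σ a = 0 := by
      by_contra hc
      exact ha ((hmemT a).mpr hc)
    rw [this]
    ring
  have hZ0 : 0 ≤ Z := Finset.sum_nonneg fun e _ => sq_nonneg _
  -- main split of the target quantity
  have hTot : (fB x v).re + (fB x w).re
      = (∑ a ∈ T, (σ a * σ a * ((GG v a a * conj (GG v a a)).re
            + (GG w a a * conj (GG w a a)).re)))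
        + ((∑ pr ∈ P, σ pr.1 * σ pr.2 * (Complex.normSq (sG pr) + Complex.normSq (sH pr)))
          - ∑ pr ∈ P, σ pr.1 * σ pr.2 * (Complex.normSq (tG pr) + Complex.normSq (tH pr))) := by
    rw [hre v, hre w, ← Finset.sum_add_distrib]
    rw [sum_pair_split T (fun a b => σ a * σ b * (GG v a b * conj (GG v b a)).re
      + σ a * σ b * (GG w a b * conj (GG w b a)).re)]
    congr 1
    · exact Finset.sum_congr rfl fun a _ => by ring
    · rw [← Finset.sum_sub_distrib]
      refine Finset.sum_congr rfl fun pr _ => ?_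
      have e1 := pair_re (GG v pr.1 pr.2) (GG v pr.2 pr.1)
      have e2 := pair_re (GG w pr.1 pr.2) (GG w pr.2 pr.1)
      simp only [hsGdef, htGdef, hsHdef, htHdef]
      linear_combination (σ pr.1 * σ pr.2) * e1 + (σ pr.1 * σ pr.2) * e2
  -- nonnegativity of discarded parts
  have hdiag0 : 0 ≤ ∑ a ∈ T, (σ a * σ a * ((GG v a a * conj (GG v a a)).re
      + (GG w a a * conj (GG w a a)).re)) := by
    refine Finset.sum_nonneg fun a _ => ?_
    have h1 : (GG v a a * conj (GG v a a)).re = Complex.normSq (GG v a a) := by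
      rw [Complex.mul_conj, Complex.ofReal_re]
    have h2 : (GG w a a * conj (GG w a a)).re = Complex.normSq (GG w a a) := by
      rw [Complex.mul_conj, Complex.ofReal_re]
    rw [h1, h2]
    have := Complex.normSq_nonneg (GG v a a)
    have := Complex.normSq_nonneg (GG w a a)
    have := hσ0 a
    positivity
  have hssum0 : 0 ≤ ∑ pr ∈ P, σ pr.1 * σ pr.2 * (Complex.normSq (sG pr) + Complex.normSq (sH pr)) := by
    refine Finset.sum_nonneg fun pr _ => ?_
    have := Complex.normSq_nonneg (sG pr)
    have := Complex.normSq_nonneg (sH pr)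
    have := hσ0 pr.1
    have := hσ0 pr.2
    positivity
  -- norm splits
  have hgVsplit : gV = (∑ a ∈ T, Complex.normSq (GG v a a))
      + (∑ pr ∈ P, Complex.normSq (sG pr) + ∑ pr ∈ P, Complex.normSq (tG pr)) := by
    rw [hgV, sum_pair_split T (fun a b => Complex.normSq (GG v a b)), ← Finset.sum_add_distrib]
    congr 1
    refine Finset.sum_congr rfl fun pr _ => ?_
    have h := pair_nsq (GG v pr.1 pr.2) (GG v pr.2 pr.1)
    simp only [hsGdef, htGdef]
    exact h
  have hgWsplit : gW = (∑ a ∈ T, Complex.normSq (GG w a a))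
      + (∑ pr ∈ P, Complex.normSq (sH pr) + ∑ pr ∈ P, Complex.normSq (tH pr)) := by
    rw [hgW, sum_pair_split T (fun a b => Complex.normSq (GG w a b)), ← Finset.sum_add_distrib]
    congr 1
    refine Finset.sum_congr rfl fun pr _ => ?_
    have h := pair_nsq (GG w pr.1 pr.2) (GG w pr.2 pr.1)
    simp only [hsHdef, htHdef]
    exact h
  set dGv : ℝ := ∑ a ∈ T, Complex.normSq (GG v a a) with hdGv
  set dGw : ℝ := ∑ a ∈ T, Complex.normSq (GG w a a) with hdGw
  set eG : ℝ := ∑ pr ∈ P, Complex.normSq (sG pr) with heG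
  set eH : ℝ := ∑ pr ∈ P, Complex.normSq (sH pr) with heH
  set aG : ℝ := ∑ pr ∈ P, Complex.normSq (tG pr) with haG
  set aH : ℝ := ∑ pr ∈ P, Complex.normSq (tH pr) with haH
  have hdGv0 : 0 ≤ dGv := Finset.sum_nonneg fun a _ => Complex.normSq_nonneg _
  have hdGw0 : 0 ≤ dGw := Finset.sum_nonneg fun a _ => Complex.normSq_nonneg _
  have heG0 : 0 ≤ eG := Finset.sum_nonneg fun a _ => Complex.normSq_nonneg _
  have heH0 : 0 ≤ eH := Finset.sum_nonneg fun a _ => Complex.normSq_nonneg _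
  have haG0 : 0 ≤ aG := Finset.sum_nonneg fun a _ => Complex.normSq_nonneg _
  have haH0 : 0 ≤ aH := Finset.sum_nonneg fun a _ => Complex.normSq_nonneg _
  have hα : aG ≤ 1 := by linarith
  have hβ : aH ≤ 1 := by linarith
  -- inner product split
  have hinsplit : ∑ ab ∈ T ×ˢ T, conj (GG v ab.1 ab.2) * GG w ab.1 ab.2
      = (∑ a ∈ T, conj (GG v a a) * GG w a a)
        + ((∑ pr ∈ P, conj (sG pr) * sH pr) + ∑ pr ∈ P, conj (tG pr) * tH pr) := by
    rw [sum_pair_split T (fun a b => conj (GG v a b) * GG w a b), ← Finset.sum_add_distrib]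
    congr 1
    refine Finset.sum_congr rfl fun pr _ => ?_
    have h := pair_inner (GG v pr.1 pr.2) (GG v pr.2 pr.1) (GG w pr.1 pr.2) (GG w pr.2 pr.1)
    simp only [hsGdef, htGdef, hsHdef, htHdef]
    exact h
  -- bound the t-inner product
  have habsDg : ‖∑ a ∈ T, conj (GG v a a) * GG w a a‖
      ≤ Real.sqrt dGv * Real.sqrt dGw := abs_sum_conj_mul_le T _ _
  have habsSg : ‖∑ pr ∈ P, conj (sG pr) * sH pr‖
      ≤ Real.sqrt eG * Real.sqrt eH := abs_sum_conj_mul_le P _ _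
  have htsum : ∑ pr ∈ P, conj (tG pr) * tH pr
      = (∑ ab ∈ T ×ˢ T, conj (GG v ab.1 ab.2) * GG w ab.1 ab.2)
        - (∑ a ∈ T, conj (GG v a a) * GG w a a) - (∑ pr ∈ P, conj (sG pr) * sH pr) := by
    rw [hinsplit]
    ring
  have habs_t : ‖∑ pr ∈ P, conj (tG pr) * tH pr‖
      ≤ Real.sqrt ((1 - aG) * (1 - aH)) := by
    rw [htsum]
    have tri : ∀ (A B C : ℂ), ‖A - B - C‖
        ≤ ‖A‖ + ‖B‖ + ‖C‖ := by
      intro A B C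
      have h1 := norm_sub_le (A - B) C
      have h2 := norm_sub_le A B
      linarith
    refine (tri _ _ _).trans ?_
    have step0 : Real.sqrt (1-gV) * Real.sqrt (1-gW) + Real.sqrt dGv * Real.sqrt dGw
        + Real.sqrt eG * Real.sqrt eH
        = Real.sqrt ((1-gV)*(1-gW)) + Real.sqrt (dGv*dGw) + Real.sqrt (eG*eH) := by
      rw [← Real.sqrt_mul (by linarith), ← Real.sqrt_mul hdGv0, ← Real.sqrt_mul heG0]
    have step1 : Real.sqrt (dGv*dGw) + Real.sqrt (eG*eH)
        ≤ Real.sqrt ((dGv+eG)*(dGw+eH)) := sqrt_cs2 hdGv0 hdGw0 heG0 heH0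
    have step2 : Real.sqrt ((1-gV)*(1-gW)) + Real.sqrt ((dGv+eG)*(dGw+eH))
        ≤ Real.sqrt (((1-gV)+(dGv+eG)) * ((1-gW)+(dGw+eH))) :=
      sqrt_cs2 (by linarith) (by linarith) (by linarith) (by linarith)
    have step3 : ((1-gV)+(dGv+eG)) * ((1-gW)+(dGw+eH)) = (1 - aG) * (1 - aH) := by
      have e1 : (1-gV)+(dGv+eG) = 1 - aG := by rw [hgVsplit]; ring
      have e2 : (1-gW)+(dGw+eH) = 1 - aH := by rw [hgWsplit]; ring
      rw [e1, e2]
    calc ‖∑ ab ∈ T ×ˢ T, conj (GG v ab.1 ab.2) * GG w ab.1 ab.2‖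
          + ‖∑ a ∈ T, conj (GG v a a) * GG w a a‖
          + ‖∑ pr ∈ P, conj (sG pr) * sH pr‖
        ≤ Real.sqrt (1-gV) * Real.sqrt (1-gW) + Real.sqrt dGv * Real.sqrt dGw
          + Real.sqrt eG * Real.sqrt eH := by linarith [habsinner, habsDg, habsSg]
      _ = Real.sqrt ((1-gV)*(1-gW)) + Real.sqrt (dGv*dGw) + Real.sqrt (eG*eH) := step0
      _ ≤ Real.sqrt ((1-gV)*(1-gW)) + Real.sqrt ((dGv+eG)*(dGw+eH)) := by linarith
      _ ≤ Real.sqrt (((1-gV)+(dGv+eG)) * ((1-gW)+(dGw+eH))) := step2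
      _ = Real.sqrt ((1 - aG) * (1 - aH)) := by rw [step3]
  -- apply lemL
  have hNbound : ∑ pr ∈ P, (σ pr.1 * σ pr.2) * (Complex.normSq (tG pr) + Complex.normSq (tH pr))
      ≤ Real.sqrt 2 / 2 * Z := by
    refine lemL hZ0 ?_ ?_ ?_ hα hβ habs_t
    · intro pr hpr
      exact mul_nonneg (hσ0 _) (hσ0 _)
    · intro pr hpr
      obtain ⟨h1, h2, h3⟩ := hmemP pr hpr
      exact weight_single hσ0 h1 h2 h3
    · intro pr hpr qr hqr hne
      obtain ⟨h1, h2, h3⟩ := hmemP pr hpr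
      obtain ⟨h4, h5, h6⟩ := hmemP qr hqr
      refine weight_pair hσ0 h1 h2 h4 h5 h3 h6 ?_
      simpa [Prod.ext_iff] using hne
  rw [← hZx, hTot]
  linarith [hdiag0, hssum0, hNbound]
lemma sum_perm4 {A B C D : Type*} [Fintype A] [Fintype B] [Fintype C] [Fintype D]
    (F : A → B → C → D → ℂ) :
    ∑ i, ∑ k, ∑ j, ∑ l, F i k j l = ∑ k, ∑ l, ∑ i, ∑ j, F i k j l := by
  rw [Finset.sum_comm]
  refine Finset.sum_congr rfl fun k _ => ?_
  rw [sum_rot3, sum_rot3]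

lemma fB_conj {m n : ℕ} (x v : Fin m × Fin n → ℂ) : conj (fB x v) = fB x v := by
  have h1 : conj (fB x v) = ∑ k : Fin n, ∑ l : Fin n,
      conj (∑ i, conj (x (i,k)) * conj (v (i,l))) * (∑ i, conj (x (i,l)) * conj (v (i,k))) := by
    have hfB : fB x v = ∑ k : Fin n, ∑ l : Fin n, (∑ i, conj (x (i,k)) * conj (v (i,l)))
        * conj (∑ i, conj (x (i,l)) * conj (v (i,k))) := rfl
    rw [hfB, _root_.map_sum]
    refine Finset.sum_congr rfl fun k _ => ?_
    rw [_root_.map_sum]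
    refine Finset.sum_congr rfl fun l _ => ?_
    rw [_root_.map_mul, Complex.conj_conj]
  rw [h1, Finset.sum_comm]
  refine Finset.sum_congr rfl fun k _ => Finset.sum_congr rfl fun l _ => ?_
  ring

lemma quad_expand {m n : ℕ} (D : Matrix (Fin m × Fin n) (Fin m × Fin n) ℂ)
    (hdiag : ∀ p q, p ≠ q → D p q = 0)
    (U : Matrix (Fin m × Fin n) (Fin m × Fin n) ℂ) (x : Fin m × Fin n → ℂ) :
    dotProduct (star x) ((ptrans (U * D * Uᴴ)).mulVec x)
      = ∑ s, D s s * fB x (fun z => U z s) := by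
  classical
  have hMentry : ∀ a b, (U * D * Uᴴ) a b = ∑ s, U a s * D s s * conj (U b s) := by
    intro a b
    rw [Matrix.mul_apply]
    have : ∀ t, (U * D) a t * Uᴴ t b = (U a t * D t t) * conj (U b t) := by
      intro t
      rw [Matrix.mul_apply, Matrix.conjTranspose_apply]
      congr 1
      · rw [Finset.sum_eq_single t]
        · intro s _ hst
          rw [hdiag s t hst]
          ring
        · intro habs
          exact absurd (Finset.mem_univ t) habs
    rw [Finset.sum_congr rfl fun t _ => this t]
  calc dotProduct (star x) ((ptrans (U * D * Uᴴ)).mulVec x)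
      = ∑ pq : Fin m × Fin n, ∑ rs : Fin m × Fin n, ∑ s,
          D s s * (conj (x pq) * U (rs.1, pq.2) s * conj (U (pq.1, rs.2) s) * x rs) := by
        simp only [dotProduct, Matrix.mulVec, Pi.star_apply, RCLike.star_def,
          Finset.mul_sum]
        refine Finset.sum_congr rfl fun pq _ => Finset.sum_congr rfl fun rs _ => ?_
        show conj (x pq) * ((U * D * Uᴴ) (rs.1, pq.2) (pq.1, rs.2) * x rs) = _
        rw [hMentry, Finset.sum_mul, Finset.mul_sum]
        exact Finset.sum_congr rfl fun s _ => by ring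
    _ = ∑ s, ∑ pq : Fin m × Fin n, ∑ rs : Fin m × Fin n,
          D s s * (conj (x pq) * U (rs.1, pq.2) s * conj (U (pq.1, rs.2) s) * x rs) := by
        rw [sum_rot3 (F := fun pq rs s => D s s *
          (conj (x pq) * U (rs.1, pq.2) s * conj (U (pq.1, rs.2) s) * x rs))]
        exact sum_rot3 _
    _ = _ := by
        refine Finset.sum_congr rfl fun s _ => ?_
        rw [show (∑ pq : Fin m × Fin n, ∑ rs : Fin m × Fin n, D s s *
            (conj (x pq) * U (rs.1, pq.2) s * conj (U (pq.1, rs.2) s) * x rs))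
            = D s s * ∑ pq : Fin m × Fin n, ∑ rs : Fin m × Fin n,
              (conj (x pq) * U (rs.1, pq.2) s * conj (U (pq.1, rs.2) s) * x rs) from by
          rw [Finset.mul_sum]
          exact Finset.sum_congr rfl fun pq _ => (Finset.mul_sum _ _ _).symm]
        congr 1
        calc ∑ pq : Fin m × Fin n, ∑ rs : Fin m × Fin n,
              conj (x pq) * U (rs.1, pq.2) s * conj (U (pq.1, rs.2) s) * x rs
            = ∑ i, ∑ k, ∑ j, ∑ l,
              conj (x (i,k)) * U (j, k) s * conj (U (i, l) s) * x (j,l) := by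
              rw [Fintype.sum_prod_type]
              refine Finset.sum_congr rfl fun i _ => Finset.sum_congr rfl fun k _ => ?_
              rw [Fintype.sum_prod_type]
          _ = ∑ k, ∑ l, ∑ i, ∑ j,
              conj (x (i,k)) * U (j, k) s * conj (U (i, l) s) * x (j,l) := sum_perm4 _
          _ = fB x (fun z => U z s) := by
              have hfB : fB x (fun z => U z s) = ∑ k : Fin n, ∑ l : Fin n,
                  (∑ i, conj (x (i,k)) * conj (U (i,l) s))
                  * conj (∑ j, conj (x (j,l)) * conj (U (j,k) s)) := rfl
              rw [hfB]
              refine Finset.sum_congr rfl fun k _ => Finset.sum_congr rfl fun l _ => ?_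
              rw [_root_.map_sum, Finset.sum_mul_sum]
              refine Finset.sum_congr rfl fun i _ => Finset.sum_congr rfl fun j _ => ?_
              rw [_root_.map_mul, Complex.conj_conj, Complex.conj_conj]
              ring
lemma ptrans_one {m n : ℕ} : ptrans (1 : Matrix (Fin m × Fin n) (Fin m × Fin n) ℂ) = 1 := by
  funext pq rs
  show (1 : Matrix (Fin m × Fin n) (Fin m × Fin n) ℂ) (rs.1, pq.2) (pq.1, rs.2) = _
  by_cases h : pq = rs
  · subst h
    simp [Matrix.one_apply]
  · rw [Matrix.one_apply_ne, Matrix.one_apply_ne h]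
    intro hc
    apply h
    obtain ⟨h1, h2⟩ := Prod.ext_iff.mp hc
    exact Prod.ext h1.symm h2

end APPT

open APPT Finset in
theorem stmt_2' {m n : ℕ} (hm : 2 ≤ m) (hn : 2 ≤ n)
    (D : Matrix (Fin m × Fin n) (Fin m × Fin n) ℂ)
    (hdiag : ∀ p q, p ≠ q → D p q = 0)
    (S : Finset (Fin m × Fin n)) (hS : S.card = 2)
    (hin : ∀ p ∈ S, D p p = ((Real.sqrt 2 + 1 : ℝ) : ℂ))
    (hout : ∀ p ∉ S, D p p = 1)
    (U : Matrix (Fin m × Fin n) (Fin m × Fin n) ℂ)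
    (hU₁ : U * Uᴴ = 1) (hU₂ : Uᴴ * U = 1) :
    (ptrans (U * D * Uᴴ)).PosSemidef := by
  classical
  obtain ⟨s₁, s₂, hs12, hSet⟩ := Finset.card_eq_two.mp hS
  have hDherm : D.IsHermitian := by
    refine Matrix.IsHermitian.ext fun pq rs => ?_
    by_cases h : rs = pq
    · subst h
      by_cases hmem : rs ∈ S
      · rw [hin rs hmem]
        exact Complex.conj_ofReal _
      · rw [hout rs hmem]
        exact star_one ℂ
    · rw [hdiag rs pq h, hdiag pq rs (fun hc => h hc.symm)]
      exact star_zero ℂ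
  have hM : (U * D * Uᴴ).IsHermitian := Matrix.isHermitian_mul_mul_conjTranspose U hDherm
  refine Matrix.PosSemidef.of_dotProduct_mulVec_nonneg ?_ ?_
  · refine Matrix.IsHermitian.ext fun pq rs => ?_
    show star ((U * D * Uᴴ) (pq.1, rs.2) (rs.1, pq.2)) = (U * D * Uᴴ) (rs.1, pq.2) (pq.1, rs.2)
    rw [← Matrix.conjTranspose_apply]
    exact congrFun (congrFun hM _) _
  · intro x
    rw [APPT.quad_expand D hdiag U x]
    set v : Fin m × Fin n → ℂ := fun z => U z s₁ with hvdef
    set w : Fin m × Fin n → ℂ := fun z => U z s₂ with hwdef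
    have hcol : ∀ s t, (∑ z, (starRingEnd ℂ) (U z s) * U z t) = if s = t then 1 else 0 := by
      intro s t
      have h := congr_fun (congr_fun hU₂ s) t
      rw [Matrix.mul_apply] at h
      simp only [Matrix.conjTranspose_apply, RCLike.star_def] at h
      rw [h, Matrix.one_apply]
    have hv : ∑ z, (starRingEnd ℂ) (v z) * v z = 1 := by
      rw [hvdef]
      rw [hcol s₁ s₁, if_pos rfl]
    have hw : ∑ z, (starRingEnd ℂ) (w z) * w z = 1 := by
      rw [hwdef]
      rw [hcol s₂ s₂, if_pos rfl]
    have hvw : ∑ z, (starRingEnd ℂ) (v z) * w z = 0 := by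
      rw [hvdef, hwdef]
      rw [hcol s₁ s₂, if_neg hs12]
    have hone : ∑ s, fB x (fun z => U z s) = ((∑ z, Complex.normSq (x z) : ℝ) : ℂ) := by
      have h1 := APPT.quad_expand 1 (fun p q hpq => Matrix.one_apply_ne hpq) U x
      rw [Matrix.mul_one, hU₁] at h1
      rw [APPT.ptrans_one, Matrix.one_mulVec] at h1
      have h2 : ∀ s : Fin m × Fin n,
          (1 : Matrix (Fin m × Fin n) (Fin m × Fin n) ℂ) s s * fB x (fun z => U z s)
            = fB x (fun z => U z s) := by
        intro s
        rw [Matrix.one_apply_eq, one_mul]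
      rw [Finset.sum_congr rfl fun s _ => h2 s] at h1
      rw [← h1]
      rw [Complex.ofReal_sum]
      refine Finset.sum_congr rfl fun z _ => ?_
      simp only [dotProduct, Pi.star_apply, RCLike.star_def]
      exact (Complex.normSq_eq_conj_mul_self).symm
    have hsplit : ∑ s, D s s * fB x (fun z => U z s)
        = ((∑ z, Complex.normSq (x z) : ℝ) : ℂ)
          + ((Real.sqrt 2 : ℝ) : ℂ) * (fB x v + fB x w) := by
      have hD1 : ∀ s : Fin m × Fin n, D s s * fB x (fun z => U z s)
          = fB x (fun z => U z s) + (D s s - 1) * fB x (fun z => U z s) := fun s => by ring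
      rw [Finset.sum_congr rfl fun s _ => hD1 s, Finset.sum_add_distrib, hone]
      congr 1
      have hz : ∀ s ∈ Finset.univ, s ∉ S → (D s s - 1) * fB x (fun z => U z s) = 0 := by
        intro s _ hs
        rw [hout s hs]
        ring
      rw [← Finset.sum_subset (Finset.subset_univ S) hz]
      have hm1 : s₁ ∈ S := by rw [hSet]; simp
      have hm2 : s₂ ∈ S := by rw [hSet]; simp
      rw [hSet, Finset.sum_pair hs12]
      rw [hin s₁ hm1, hin s₂ hm2]
      rw [hvdef, hwdef]
      push_cast
      ring
    rw [hsplit]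
    have hcore := APPT.core x v w hv hw hvw
    set N : ℝ := ∑ z, Complex.normSq (x z) with hNdef
    have hN0 : 0 ≤ N := Finset.sum_nonneg fun z _ => Complex.normSq_nonneg _
    have hs2 : Real.sqrt 2 * Real.sqrt 2 = 2 := Real.mul_self_sqrt (by norm_num)
    rw [Complex.nonneg_iff]
    constructor
    · simp only [Complex.add_re, Complex.ofReal_re, Complex.re_ofReal_mul, Complex.add_re]
      have hmul := mul_le_mul_of_nonneg_left hcore (Real.sqrt_nonneg 2)
      nlinarith [hmul]
    · have him1 : (fB x v).im = 0 := by
        have := APPT.fB_conj x v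
        rwa [Complex.conj_eq_iff_im] at this
      have him2 : (fB x w).im = 0 := by
        have := APPT.fB_conj x w
        rwa [Complex.conj_eq_iff_im] at this
      have him : (fB x v + fB x w).im = 0 := by
        rw [Complex.add_im, him1, him2]
        ring
      simp [Complex.add_im, Complex.mul_im, Complex.ofReal_im, him]


/-- A diagonal matrix with exactly two diagonal entries equal to `√2 + 1` and
all others equal to `1` is absolutely PPT. -/
theorem stmt_2 {m n : ℕ} (hm : 2 ≤ m) (hn : 2 ≤ n)
    (D : Matrix (Fin m × Fin n) (Fin m × Fin n) ℂ)
    (hdiag : ∀ p q, p ≠ q → D p q = 0)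
    (S : Finset (Fin m × Fin n)) (hS : S.card = 2)
    (hin : ∀ p ∈ S, D p p = ((Real.sqrt 2 + 1 : ℝ) : ℂ))
    (hout : ∀ p ∉ S, D p p = 1)
    (U : Matrix (Fin m × Fin n) (Fin m × Fin n) ℂ)
    (hU₁ : U * Uᴴ = 1) (hU₂ : Uᴴ * U = 1) :
    (ptrans (U * D * Uᴴ)).PosSemidef :=
  stmt_2' hm hn D hdiag S hS hin hout U hU₁ hU₂

end
end

section
/- Let n ≥ 2 and let W be a normalized 2×n entanglement witness with eigenvalues λ_1 ≥ λ_2 ≥ … ≥ λ_{2n} listed in non-increasing order with multiplicity. Then λ_2 + λ_{2n} ≥ 0, i.e., the sum of the second-largest and the smallest eigenvalue of W is nonnegative. -/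
open Matrix ComplexOrder

noncomputable section

section Aux

open Complex

/-- For a traceless `2 × 2` complex array of coefficients, there is a unit vector
`(x, y) ∈ ℂ²` on which the associated sesquilinear expression vanishes. -/
lemma gl2_construction (D00 D01 D10 D11 : ℂ) (htr : D00 + D11 = 0) :
    ∃ x y : ℂ, x * (starRingEnd ℂ) x + y * (starRingEnd ℂ) y = 1 ∧
      D00 * (x * (starRingEnd ℂ) x) + D01 * (x * (starRingEnd ℂ) y)
        + D10 * (y * (starRingEnd ℂ) x) + D11 * (y * (starRingEnd ℂ) y) = 0 := by
  by_cases h0 : D00 = 0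
  · exact ⟨1, 0, by simp, by simp [h0]⟩
  · set α : ℝ := ((D10 + D01) * (starRingEnd ℂ) D00).im with hα
    set β : ℝ := ((D10 - D01) * (starRingEnd ℂ) D00).re with hβ
    have him_formula : ∀ ω : ℂ,
        ((ω * D10 + (starRingEnd ℂ) ω * D01) * (starRingEnd ℂ) D00).im
          = ω.re * α + ω.im * β := by
      intro ω
      simp only [hα, hβ, add_mul, sub_mul, Complex.add_im, Complex.mul_im, Complex.mul_re,
        Complex.conj_re, Complex.conj_im, Complex.add_re, Complex.sub_re, Complex.sub_im]
      ring
    obtain ⟨ω, hωnorm, hωim⟩ : ∃ ω : ℂ, Complex.normSq ω = 1 ∧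
        ((ω * D10 + (starRingEnd ℂ) ω * D01) * (starRingEnd ℂ) D00).im = 0 := by
      by_cases hab : α = 0 ∧ β = 0
      · exact ⟨1, by simp, by rw [him_formula]; simp [hab.1, hab.2]⟩
      · have hpos : 0 < α ^ 2 + β ^ 2 := by
          rcases not_and_or.mp hab with h | h
          · have := pow_pos (abs_pos.mpr h) 2
            nlinarith [_root_.sq_abs α, sq_nonneg β]
          · have := pow_pos (abs_pos.mpr h) 2
            nlinarith [_root_.sq_abs β, sq_nonneg α]
        set r : ℝ := Real.sqrt (α ^ 2 + β ^ 2) with hr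
        have hrpos : 0 < r := Real.sqrt_pos.mpr hpos
        have hr2 : r ^ 2 = α ^ 2 + β ^ 2 := Real.sq_sqrt hpos.le
        refine ⟨⟨β / r, -α / r⟩, ?_, ?_⟩
        · simp only [Complex.normSq_mk]
          field_simp
          nlinarith [hr2]
        · rw [him_formula]
          simp only []
          field_simp
          ring
    set z : ℂ := (ω * D10 + (starRingEnd ℂ) ω * D01) * (starRingEnd ℂ) D00 with hz
    have hzre : z = (z.re : ℂ) := by
      apply Complex.ext <;> simp [hωim]
    set κ : ℝ := z.re / Complex.normSq D00 with hκ
    have hnormSqpos : 0 < Complex.normSq D00 := Complex.normSq_pos.mpr h0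
    have key2 : ω * D10 + (starRingEnd ℂ) ω * D01 = (κ : ℂ) * D00 := by
      have hconj_ne : (starRingEnd ℂ) D00 ≠ 0 := by simpa using h0
      have h1 : (ω * D10 + (starRingEnd ℂ) ω * D01) * (starRingEnd ℂ) D00 = ((z.re : ℝ) : ℂ) := by
        rw [← hz, ← hzre]
      have h2 : (κ : ℂ) * D00 * (starRingEnd ℂ) D00 = ((z.re : ℝ) : ℂ) := by
        have hmc : D00 * (starRingEnd ℂ) D00 = ((Complex.normSq D00 : ℝ) : ℂ) :=
          Complex.mul_conj D00
        have hne : ((Complex.normSq D00 : ℝ) : ℂ) ≠ 0 := by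
          simpa using hnormSqpos.ne'
        rw [mul_assoc, hmc, hκ]
        push_cast
        field_simp
      exact mul_right_cancel₀ hconj_ne (h1.trans h2.symm)
    set e : ℝ := Real.sqrt (κ ^ 2 + 4) with he
    have hepos : 0 < e := Real.sqrt_pos.mpr (by positivity)
    have he2 : e ^ 2 = κ ^ 2 + 4 := Real.sq_sqrt (by positivity)
    have hκe : |κ| < e := by
      have h1 : |κ| = Real.sqrt (κ ^ 2) := (Real.sqrt_sq_eq_abs κ).symm
      rw [h1, he]
      exact Real.sqrt_lt_sqrt (sq_nonneg κ) (by linarith)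
    obtain ⟨hκe1, hκe2⟩ := abs_lt.mp hκe
    set c : ℝ := Real.sqrt ((1 - κ / e) / 2) with hc
    set s : ℝ := Real.sqrt ((1 + κ / e) / 2) with hs
    have hcrad : 0 ≤ (1 - κ / e) / 2 := by
      have : κ / e ≤ 1 := by rw [div_le_one hepos]; linarith
      linarith
    have hsrad : 0 ≤ (1 + κ / e) / 2 := by
      have : -1 ≤ κ / e := by rw [le_div_iff₀ hepos]; linarith
      linarith
    have hc2 : c ^ 2 = (1 - κ / e) / 2 := Real.sq_sqrt hcrad
    have hs2 : s ^ 2 = (1 + κ / e) / 2 := Real.sq_sqrt hsrad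
    have hcs : c * s = 1 / e := by
      have h1 : c * s = Real.sqrt (((1 - κ / e) / 2) * ((1 + κ / e) / 2)) :=
        (Real.sqrt_mul hcrad _).symm
      have h2 : ((1 - κ / e) / 2) * ((1 + κ / e) / 2) = (1 / e) ^ 2 := by
        field_simp
        nlinarith [he2]
      rw [h1, h2, Real.sqrt_sq (by positivity)]
    have hωn : ω * (starRingEnd ℂ) ω = 1 := by
      rw [Complex.mul_conj, hωnorm]; simp
    refine ⟨(c : ℂ), (s : ℂ) * ω, ?_, ?_⟩
    · have hsum : c ^ 2 + s ^ 2 = 1 := by rw [hc2, hs2]; ring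
      calc (c : ℂ) * (starRingEnd ℂ) (c : ℂ) + (s : ℂ) * ω * (starRingEnd ℂ) ((s : ℂ) * ω)
          = ((c:ℂ)^2 + (s:ℂ)^2 * (ω * (starRingEnd ℂ) ω)) := by
            simp only [_root_.map_mul, Complex.conj_ofReal]; ring
        _ = ((c ^ 2 + s ^ 2 : ℝ) : ℂ) := by rw [hωn]; push_cast; ring
        _ = 1 := by rw [hsum]; simp
    · have hD11 : D11 = -D00 := by linear_combination htr
      have hreal : c ^ 2 - s ^ 2 + (c * s) * κ = 0 := by
        rw [hc2, hs2, hcs]; field_simp; ring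
      have expand : D00 * ((c:ℂ) * (starRingEnd ℂ) (c:ℂ))
            + D01 * ((c:ℂ) * (starRingEnd ℂ) ((s:ℂ) * ω))
            + D10 * (((s:ℂ) * ω) * (starRingEnd ℂ) (c:ℂ))
            + D11 * (((s:ℂ) * ω) * (starRingEnd ℂ) ((s:ℂ) * ω))
          = ((c:ℂ)^2) * D00 + ((c:ℂ)*(s:ℂ)) * (ω * D10 + (starRingEnd ℂ) ω * D01)
            - ((s:ℂ)^2) * (ω * (starRingEnd ℂ) ω) * D00 := by
        rw [hD11]; simp only [_root_.map_mul, Complex.conj_ofReal]; ring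
      rw [expand, hωn, key2]
      have : ((c:ℂ)^2) * D00 + ((c:ℂ)*(s:ℂ)) * ((κ:ℂ) * D00) - ((s:ℂ)^2) * 1 * D00
          = ((c ^ 2 - s ^ 2 + (c * s) * κ : ℝ) : ℂ) * D00 := by push_cast; ring
      rw [this, hreal]
      simp

/-- Geometric lemma: given `u ⊥ v` with `v` a unit vector in `ℂ² ⊗ ℂⁿ`, there is a
product vector `p` orthogonal to `u` with `⟨v,p⟩ = ‖p‖² = τ ≥ 1/2`. -/
lemma gl_main {n : ℕ} (u v : Fin 2 × Fin n → ℂ)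
    (huv : star u ⬝ᵥ v = 0) (hvv : star v ⬝ᵥ v = 1) :
    ∃ (a : Fin 2 → ℂ) (b : Fin n → ℂ) (τ : ℝ),
      star u ⬝ᵥ prodVec a b = 0 ∧ star v ⬝ᵥ prodVec a b = (τ : ℂ) ∧
      star (prodVec a b) ⬝ᵥ prodVec a b = (τ : ℂ) ∧ 1 / 2 ≤ τ := by
  classical
  set D00 : ℂ := ∑ k, (starRingEnd ℂ) (u (0, k)) * v (0, k) with hD00
  set D01 : ℂ := ∑ k, (starRingEnd ℂ) (u (0, k)) * v (1, k) with hD01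
  set D10 : ℂ := ∑ k, (starRingEnd ℂ) (u (1, k)) * v (0, k) with hD10
  set D11 : ℂ := ∑ k, (starRingEnd ℂ) (u (1, k)) * v (1, k) with hD11
  have htrD : D00 + D11 = 0 := by
    rw [hD00, hD11, ← Finset.sum_add_distrib]
    rw [← huv]
    rw [dotProduct]
    rw [Fintype.sum_prod_type]
    rw [Fin.sum_univ_two]
    rw [← Finset.sum_add_distrib]
    simp [Pi.star_apply, Complex.star_def]
  have key_udot : ∀ x y : ℂ,
      star u ⬝ᵥ prodVec ![x, y] (fun k => v (0, k) * (starRingEnd ℂ) x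
          + v (1, k) * (starRingEnd ℂ) y)
        = D00 * (x * (starRingEnd ℂ) x) + D01 * (x * (starRingEnd ℂ) y)
          + D10 * (y * (starRingEnd ℂ) x) + D11 * (y * (starRingEnd ℂ) y) := by
    intro x y
    rw [dotProduct, Fintype.sum_prod_type, Fin.sum_univ_two,
      hD00, hD01, hD10, hD11, Finset.sum_mul, Finset.sum_mul, Finset.sum_mul, Finset.sum_mul,
      ← Finset.sum_add_distrib, ← Finset.sum_add_distrib, ← Finset.sum_add_distrib,
      ← Finset.sum_add_distrib]
    refine Finset.sum_congr rfl fun k _ => ?_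
    simp only [prodVec, Pi.star_apply, Complex.star_def, Matrix.cons_val_zero,
      Matrix.cons_val_one, Matrix.head_cons]
    ring
  have key_vdot : ∀ x y : ℂ,
      star v ⬝ᵥ prodVec ![x, y] (fun k => v (0, k) * (starRingEnd ℂ) x
          + v (1, k) * (starRingEnd ℂ) y)
        = ((∑ k, Complex.normSq (v (0, k) * (starRingEnd ℂ) x
            + v (1, k) * (starRingEnd ℂ) y) : ℝ) : ℂ) := by
    intro x y
    rw [dotProduct, Fintype.sum_prod_type, Fin.sum_univ_two, ← Finset.sum_add_distrib]
    push_cast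
    refine Finset.sum_congr rfl fun k _ => ?_
    rw [← Complex.mul_conj]
    simp only [prodVec, Pi.star_apply, Complex.star_def, Matrix.cons_val_zero,
      Matrix.cons_val_one, Matrix.head_cons, _root_.map_add, _root_.map_mul, Complex.conj_conj]
    ring
  have key_pdot : ∀ x y : ℂ, (x * (starRingEnd ℂ) x + y * (starRingEnd ℂ) y = 1) →
      star (prodVec ![x, y] (fun k => v (0, k) * (starRingEnd ℂ) x
          + v (1, k) * (starRingEnd ℂ) y)) ⬝ᵥ prodVec ![x, y] (fun k => v (0, k) * (starRingEnd ℂ) x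
          + v (1, k) * (starRingEnd ℂ) y)
        = ((∑ k, Complex.normSq (v (0, k) * (starRingEnd ℂ) x
            + v (1, k) * (starRingEnd ℂ) y) : ℝ) : ℂ) := by
    intro x y hunit
    rw [dotProduct, Fintype.sum_prod_type, Fin.sum_univ_two, ← Finset.sum_add_distrib]
    push_cast
    refine Finset.sum_congr rfl fun k _ => ?_
    have expand : (starRingEnd ℂ) (prodVec ![x, y] (fun k => v (0, k) * (starRingEnd ℂ) x
            + v (1, k) * (starRingEnd ℂ) y) (0, k)) * (prodVec ![x, y] (fun k => v (0, k) * (starRingEnd ℂ) x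
            + v (1, k) * (starRingEnd ℂ) y) (0, k))
          + (starRingEnd ℂ) (prodVec ![x, y] (fun k => v (0, k) * (starRingEnd ℂ) x
            + v (1, k) * (starRingEnd ℂ) y) (1, k)) * (prodVec ![x, y] (fun k => v (0, k) * (starRingEnd ℂ) x
            + v (1, k) * (starRingEnd ℂ) y) (1, k))
        = (x * (starRingEnd ℂ) x + y * (starRingEnd ℂ) y) *
            ((v (0, k) * (starRingEnd ℂ) x + v (1, k) * (starRingEnd ℂ) y) *
              (starRingEnd ℂ) (v (0, k) * (starRingEnd ℂ) x + v (1, k) * (starRingEnd ℂ) y)) := by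
      simp only [prodVec, Matrix.cons_val_zero, Matrix.cons_val_one, Matrix.head_cons,
        _root_.map_add, _root_.map_mul, Complex.conj_conj]
      ring
    simp only [Pi.star_apply, Complex.star_def]
    rw [expand, hunit, one_mul, Complex.mul_conj]
  have key_switch : ∀ x y : ℂ, (x * (starRingEnd ℂ) x + y * (starRingEnd ℂ) y = 1) →
      (∑ k, Complex.normSq (v (0, k) * (starRingEnd ℂ) x + v (1, k) * (starRingEnd ℂ) y))
      + (∑ k, Complex.normSq (v (0, k) * (starRingEnd ℂ) (-(starRingEnd ℂ) y)
          + v (1, k) * (starRingEnd ℂ) ((starRingEnd ℂ) x))) = 1 := by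
    intro x y hunit
    have hC : ((∑ k, Complex.normSq (v (0, k) * (starRingEnd ℂ) x + v (1, k) * (starRingEnd ℂ) y))
        + (∑ k, Complex.normSq (v (0, k) * (starRingEnd ℂ) (-(starRingEnd ℂ) y)
          + v (1, k) * (starRingEnd ℂ) ((starRingEnd ℂ) x))) : ℂ) = 1 := by
      push_cast
      rw [← Finset.sum_add_distrib]
      have hterm : ∀ k : Fin n, ((Complex.normSq (v (0, k) * (starRingEnd ℂ) x
            + v (1, k) * (starRingEnd ℂ) y) : ℝ) : ℂ)
          + ((Complex.normSq (v (0, k) * (starRingEnd ℂ) (-(starRingEnd ℂ) y)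
            + v (1, k) * (starRingEnd ℂ) ((starRingEnd ℂ) x)) : ℝ) : ℂ)
          = ((starRingEnd ℂ) (v (0, k)) * v (0, k) + (starRingEnd ℂ) (v (1, k)) * v (1, k))
            * (x * (starRingEnd ℂ) x + y * (starRingEnd ℂ) y) := by
        intro k
        rw [← Complex.mul_conj, ← Complex.mul_conj]
        simp only [_root_.map_add, _root_.map_mul, _root_.map_neg, Complex.conj_conj]
        ring
      rw [Finset.sum_congr rfl fun k _ => hterm k]
      rw [← Finset.sum_mul, hunit, mul_one]
      rw [← hvv, dotProduct, Fintype.sum_prod_type, Fin.sum_univ_two,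
        ← Finset.sum_add_distrib]
      simp [Pi.star_apply, Complex.star_def]
    exact_mod_cast hC
  obtain ⟨x, y, hunit, hQ⟩ := gl2_construction D00 D01 D10 D11 htrD
  have hunit' : (-(starRingEnd ℂ) y) * (starRingEnd ℂ) (-(starRingEnd ℂ) y)
      + ((starRingEnd ℂ) x) * (starRingEnd ℂ) ((starRingEnd ℂ) x) = 1 := by
    simp only [_root_.map_neg, Complex.conj_conj]
    linear_combination hunit
  have hQ' : D00 * ((-(starRingEnd ℂ) y) * (starRingEnd ℂ) (-(starRingEnd ℂ) y))
      + D01 * ((-(starRingEnd ℂ) y) * (starRingEnd ℂ) ((starRingEnd ℂ) x))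
      + D10 * (((starRingEnd ℂ) x) * (starRingEnd ℂ) (-(starRingEnd ℂ) y))
      + D11 * (((starRingEnd ℂ) x) * (starRingEnd ℂ) ((starRingEnd ℂ) x)) = 0 := by
    simp only [_root_.map_neg, Complex.conj_conj]
    linear_combination (x * (starRingEnd ℂ) x + y * (starRingEnd ℂ) y) * htrD - hQ
  set τ₁ : ℝ := ∑ k, Complex.normSq (v (0, k) * (starRingEnd ℂ) x
      + v (1, k) * (starRingEnd ℂ) y) with hτ₁
  set τ₂ : ℝ := ∑ k, Complex.normSq (v (0, k) * (starRingEnd ℂ) (-(starRingEnd ℂ) y)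
      + v (1, k) * (starRingEnd ℂ) ((starRingEnd ℂ) x)) with hτ₂
  have hsum : τ₁ + τ₂ = 1 := key_switch x y hunit
  by_cases hhalf : 1 / 2 ≤ τ₁
  · exact ⟨![x, y], _, τ₁, by rw [key_udot x y, hQ], key_vdot x y,
      key_pdot x y hunit, hhalf⟩
  · refine ⟨![-(starRingEnd ℂ) y, (starRingEnd ℂ) x], _, τ₂,
      by rw [key_udot _ _, hQ'], key_vdot _ _, key_pdot _ _ hunit', by linarith⟩

lemma rayleigh_bound {m : Type*} [Fintype m] [DecidableEq m] {W : Matrix m m ℂ}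
    (hH : W.IsHermitian) (t : ℝ) (i₀ : m)
    (hbound : ∀ i, i ≠ i₀ → hH.eigenvalues i ≤ t)
    (q : m → ℂ) (hq : star (⇑(hH.eigenvectorBasis i₀)) ⬝ᵥ q = 0) :
    (star q ⬝ᵥ (W *ᵥ q)).re ≤ t * (star q ⬝ᵥ q).re := by
  classical
  set U : Matrix m m ℂ := (hH.eigenvectorUnitary : Matrix m m ℂ) with hU
  set c : m → ℂ := (star U) *ᵥ q with hc
  have hUU : U * star U = 1 := (Matrix.mem_unitaryGroup_iff).mp hH.eigenvectorUnitary.2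
  have hstarc : star c = star q ᵥ* U := by
    rw [hc, Matrix.star_mulVec]
    congr 1
    rw [Matrix.star_eq_conjTranspose, Matrix.conjTranspose_conjTranspose]
  have hci₀ : c i₀ = 0 := by
    rw [hc, ← hq]
    simp only [Matrix.mulVec, dotProduct, Pi.star_apply]
    refine Finset.sum_congr rfl fun j _ => ?_
    beta_reduce; rw [Matrix.star_apply, hU, Matrix.IsHermitian.eigenvectorUnitary_apply]
  have h1 : star q ⬝ᵥ (W *ᵥ q) = ∑ i, (hH.eigenvalues i : ℂ) * ((starRingEnd ℂ) (c i) * c i) := by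
    conv_lhs => rw [hH.spectral_theorem, Unitary.conjStarAlgAut_apply]
    rw [← Matrix.mulVec_mulVec, ← Matrix.mulVec_mulVec, Matrix.dotProduct_mulVec, ← hstarc]
    rw [show (star U *ᵥ q) = c from rfl]
    rw [dotProduct]
    refine Finset.sum_congr rfl fun i _ => ?_
    rw [Matrix.mulVec_diagonal]
    simp only [Pi.star_apply, Function.comp_apply, Complex.star_def, RCLike.ofReal_alg,
      smul_eq_mul, Complex.real_smul]
    ring
  have h2 : star q ⬝ᵥ q = ∑ i, ((starRingEnd ℂ) (c i) * c i) := by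
    have h3 : star c ⬝ᵥ c = ∑ i, ((starRingEnd ℂ) (c i) * c i) := by
      rw [dotProduct]; rfl
    rw [← h3, hstarc, hc, ← Matrix.dotProduct_mulVec, Matrix.mulVec_mulVec, hUU,
      Matrix.one_mulVec]
  have h1re : (star q ⬝ᵥ (W *ᵥ q)).re = ∑ i, hH.eigenvalues i * Complex.normSq (c i) := by
    rw [h1, Complex.re_sum]
    refine Finset.sum_congr rfl fun i _ => ?_
    rw [show (starRingEnd ℂ) (c i) * c i = ((Complex.normSq (c i) : ℝ) : ℂ) by
      rw [mul_comm, Complex.mul_conj]]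
    rw [← Complex.ofReal_mul]
    exact Complex.ofReal_re _
  have h2re : (star q ⬝ᵥ q).re = ∑ i, Complex.normSq (c i) := by
    rw [h2, Complex.re_sum]
    refine Finset.sum_congr rfl fun i _ => ?_
    rw [show (starRingEnd ℂ) (c i) * c i = ((Complex.normSq (c i) : ℝ) : ℂ) by
      rw [mul_comm, Complex.mul_conj]]
    exact Complex.ofReal_re _
  rw [h1re, h2re, Finset.mul_sum]
  rw [← Finset.sum_erase_add _ _ (Finset.mem_univ i₀),
    ← Finset.sum_erase_add _ _ (Finset.mem_univ i₀)]
  rw [hci₀]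
  simp only [Complex.normSq_zero, mul_zero, add_zero]
  refine Finset.sum_le_sum fun i hi => ?_
  exact mul_le_mul_of_nonneg_right (hbound i (Finset.ne_of_mem_erase hi))
    (Complex.normSq_nonneg _)

lemma sorted_getD_last_le {l : List ℝ} (hs : l.Pairwise (· ≥ ·)) {x : ℝ} (hx : x ∈ l) :
    l.getD (l.length - 1) 0 ≤ x := by
  obtain ⟨⟨j, hj⟩, rfl⟩ := List.mem_iff_get.mp hx
  have hlast : l.length - 1 < l.length := by omega
  rw [List.getD_eq_getElem _ _ hlast]
  exact hs.rel_get_of_le (a := ⟨j, hj⟩) (b := ⟨_, hlast⟩) (by simp [Fin.mk_le_mk]; omega)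

lemma sorted_second_aux {ι : Type*} [Fintype ι] [DecidableEq ι] (f : ι → ℝ)
    (l : List ℝ) (hsort : l.Pairwise (· ≥ ·))
    (hperm : (l : Multiset ℝ) = Finset.univ.val.map f) (hlen : 2 ≤ l.length) :
    ∃ i₀ : ι, (∀ i, f i ≤ f i₀) ∧ ∀ i, i ≠ i₀ → f i ≤ l.getD 1 0 := by
  classical
  rcases l with _ | ⟨x, _ | ⟨y, t⟩⟩
  · simp at hlen
  · simp at hlen
  · have hx_mem : x ∈ Finset.univ.val.map f := by
      rw [← hperm]; simp
    obtain ⟨i₀, _, hfi₀⟩ := Multiset.mem_map.mp hx_mem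
    refine ⟨i₀, ?_, ?_⟩
    · intro i
      have hfi : f i ∈ (x :: y :: t : List ℝ) := by
        have h5 : f i ∈ Finset.univ.val.map f :=
          Multiset.mem_map_of_mem f (Finset.mem_univ i)
        rw [← hperm] at h5
        exact_mod_cast h5
      rw [hfi₀]
      rcases List.mem_cons.mp hfi with h | h
      · rw [h]
      · exact List.rel_of_pairwise_cons hsort h
    · intro i hi
      have hsplit : Finset.univ.val = i₀ ::ₘ Finset.univ.val.erase i₀ :=
        (Multiset.cons_erase (Finset.mem_univ i₀ : i₀ ∈ Finset.univ)).symm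
      have hmap : Finset.univ.val.map f = f i₀ ::ₘ (Finset.univ.val.erase i₀).map f := by
        conv_lhs => rw [hsplit]
        rw [Multiset.map_cons]
      have htail : ((y :: t : List ℝ) : Multiset ℝ) = (Finset.univ.val.erase i₀).map f := by
        have h3 : (x ::ₘ (y :: t : List ℝ) : Multiset ℝ)
            = f i₀ ::ₘ (Finset.univ.val.erase i₀).map f := by
          rw [← hmap, ← hperm]
          rfl
        rw [hfi₀] at h3
        exact (Multiset.cons_inj_right _).mp h3
      have hfi_mem : f i ∈ (y :: t : List ℝ) := by
        have h1 : i ∈ Finset.univ.val.erase i₀ :=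
          (Multiset.mem_erase_of_ne hi).mpr (Finset.mem_univ i)
        have h2 : f i ∈ (Finset.univ.val.erase i₀).map f := Multiset.mem_map_of_mem f h1
        rw [← htail] at h2
        exact_mod_cast h2
      have hgetD : (x :: y :: t : List ℝ).getD 1 0 = y := rfl
      rw [hgetD]
      rcases List.mem_cons.mp hfi_mem with h | h
      · rw [h]
      · exact List.rel_of_pairwise_cons hsort.of_cons h

lemma dot_conj_symm {m : Type*} [Fintype m] (x y : m → ℂ) :
    star x ⬝ᵥ y = (starRingEnd ℂ) (star y ⬝ᵥ x) := by
  simp only [dotProduct, Pi.star_apply, Complex.star_def, map_sum, _root_.map_mul,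
    Complex.conj_conj]
  exact Finset.sum_congr rfl fun i _ => mul_comm _ _

lemma dot_self_re_nonneg {m : Type*} [Fintype m] (x : m → ℂ) :
    0 ≤ (star x ⬝ᵥ x).re := by
  have h : star x ⬝ᵥ x = ∑ i, ((Complex.normSq (x i) : ℝ) : ℂ) := by
    rw [dotProduct]
    refine Finset.sum_congr rfl fun i _ => ?_
    rw [Pi.star_apply, Complex.star_def, mul_comm, Complex.mul_conj]
  rw [h, Complex.re_sum]
  exact Finset.sum_nonneg fun i _ => by simpa using Complex.normSq_nonneg (x i)

end Aux

/-- For a normalized `2 × n` entanglement witness with eigenvalues listed in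
non-increasing order, `λ_2 + λ_{2n} ≥ 0`. -/
theorem stmt_6 {n : ℕ} (hn : 2 ≤ n)
    (W : Matrix (Fin 2 × Fin n) (Fin 2 × Fin n) ℂ)
    (hBP : BlockPositive W) (hNP : ¬ W.PosSemidef) (htr : W.trace = 1) :
    0 ≤ (sortedEigs hBP.1).getD 1 0 + (sortedEigs hBP.1).getD (2 * n - 1) 0 := by
  classical
  set hH : W.IsHermitian := hBP.1 with hHdef
  set f : Fin 2 × Fin n → ℝ := hH.eigenvalues with hf
  set l : List ℝ := sortedEigs hH with hldef
  have hlsort : l.Pairwise (· ≥ ·) := Multiset.pairwise_sort _ _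
  have hlperm : (l : Multiset ℝ) = Finset.univ.val.map f := Multiset.sort_eq _ _
  have hcard : Fintype.card (Fin 2 × Fin n) = 2 * n := by simp
  have hlen : l.length = 2 * n := by
    rw [hldef, sortedEigs, Multiset.length_sort, Multiset.card_map, ← Finset.card_def,
      Finset.card_univ, hcard]
  -- sum of eigenvalues is the trace
  have htrsum : ∑ i, f i = 1 := by
    have hU'U : star (hH.eigenvectorUnitary : Matrix (Fin 2 × Fin n) (Fin 2 × Fin n) ℂ)
        * (hH.eigenvectorUnitary : Matrix (Fin 2 × Fin n) (Fin 2 × Fin n) ℂ) = 1 :=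
      (Matrix.mem_unitaryGroup_iff').mp hH.eigenvectorUnitary.2
    have h1 : W.trace = ∑ i, (f i : ℂ) := by
      conv_lhs => rw [hH.spectral_theorem, Unitary.conjStarAlgAut_apply]
      rw [Matrix.trace_mul_comm, ← Matrix.mul_assoc, hU'U, Matrix.one_mul,
        Matrix.trace_diagonal]
      simp [hf]
    rw [htr] at h1
    have h2 : ((∑ i, f i : ℝ) : ℂ) = 1 := by push_cast; exact h1.symm
    exact_mod_cast h2
  -- there is a negative eigenvalue
  have hneg : ∃ i, f i < 0 := by
    by_contra hcon
    push_neg at hcon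
    exact hNP (hH.posSemidef_iff_eigenvalues_nonneg.mpr hcon)
  -- top index
  obtain ⟨i₀, hmax, hbound⟩ := sorted_second_aux f l hlsort hlperm (by omega)
  -- bottom index
  have htmin_lt : 2 * n - 1 < l.length := by omega
  have htmin_mem : l.getD (2 * n - 1) 0 ∈ l := by
    rw [List.getD_eq_getElem _ _ htmin_lt]
    exact List.getElem_mem _
  obtain ⟨i₁, _, hfi₁⟩ := Multiset.mem_map.mp (by rw [← hlperm]; exact_mod_cast htmin_mem :
    l.getD (2 * n - 1) 0 ∈ Finset.univ.val.map f)
  have hminle : ∀ i, l.getD (2 * n - 1) 0 ≤ f i := by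
    intro i
    have h5 : f i ∈ l := by
      have : f i ∈ Finset.univ.val.map f := Multiset.mem_map_of_mem f (Finset.mem_univ i)
      rw [← hlperm] at this
      exact_mod_cast this
    have := sorted_getD_last_le hlsort h5
    rwa [hlen, show 2 * n - 1 = 2 * n - 1 from rfl] at this
  set t₂ : ℝ := l.getD 1 0 with ht₂
  set tmin : ℝ := l.getD (2 * n - 1) 0 with htmin
  -- tmin < 0
  obtain ⟨ineg, hineg⟩ := hneg
  have htminneg : tmin < 0 := lt_of_le_of_lt (hminle ineg) hineg
  -- f i₀ > 0
  have hfi₀pos : 0 < f i₀ := by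
    by_contra hcon
    push_neg at hcon
    have hall : ∀ i ∈ Finset.univ, f i ≤ 0 := fun i _ => le_trans (hmax i) hcon
    have := Finset.sum_nonpos hall
    rw [htrsum] at this
    linarith
  have hi₁i₀ : i₁ ≠ i₀ := by
    intro h
    rw [h] at hfi₁
    rw [hfi₁] at hfi₀pos
    linarith
  -- eigenvectors
  set u : Fin 2 × Fin n → ℂ := ⇑(hH.eigenvectorBasis i₀) with hu
  set v : Fin 2 × Fin n → ℂ := ⇑(hH.eigenvectorBasis i₁) with hv
  have hortho : ∀ i j : Fin 2 × Fin n,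
      star (⇑(hH.eigenvectorBasis i)) ⬝ᵥ (⇑(hH.eigenvectorBasis j))
        = if i = j then 1 else 0 := by
    intro i j
    have hU'U : star (hH.eigenvectorUnitary : Matrix (Fin 2 × Fin n) (Fin 2 × Fin n) ℂ)
        * (hH.eigenvectorUnitary : Matrix (Fin 2 × Fin n) (Fin 2 × Fin n) ℂ) = 1 :=
      (Matrix.mem_unitaryGroup_iff').mp hH.eigenvectorUnitary.2
    have h6 := congrFun (congrFun hU'U i) j
    rw [Matrix.mul_apply] at h6
    have h7 : ∀ k, (star (hH.eigenvectorUnitary : Matrix (Fin 2 × Fin n) (Fin 2 × Fin n) ℂ)) i k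
        * (hH.eigenvectorUnitary : Matrix (Fin 2 × Fin n) (Fin 2 × Fin n) ℂ) k j
        = star (⇑(hH.eigenvectorBasis i) k) * ⇑(hH.eigenvectorBasis j) k := by
      intro k
      rw [Matrix.star_apply, Matrix.IsHermitian.eigenvectorUnitary_apply,
        Matrix.IsHermitian.eigenvectorUnitary_apply]
    rw [Finset.sum_congr rfl fun k _ => h7 k] at h6
    rw [dotProduct]
    simp only [Pi.star_apply]
    rw [h6, Matrix.one_apply]
  have huv : star u ⬝ᵥ v = 0 := by
    rw [hu, hv, hortho i₀ i₁, if_neg (Ne.symm hi₁i₀)]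
  have hvv : star v ⬝ᵥ v = 1 := by
    rw [hv, hortho i₁ i₁, if_pos rfl]
  -- the product vector from the geometric lemma
  obtain ⟨a, b, τ, hup, hvp, hpp, hτhalf⟩ := gl_main u v huv hvv
  set p : Fin 2 × Fin n → ℂ := prodVec a b with hp
  -- eigenvector equation
  have hWv : W *ᵥ v = ((f i₁ : ℝ) : ℂ) • v := by
    rw [hv]
    have h8 := hH.mulVec_eigenvectorBasis i₁
    rw [h8]
    funext j
    simp [Complex.real_smul, hf]
  -- the orthogonal part q
  set q : Fin 2 × Fin n → ℂ := p - ((τ : ℝ) : ℂ) • v with hq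
  have hvq : star v ⬝ᵥ q = 0 := by
    rw [hq, dotProduct_sub, dotProduct_smul, hvp, hvv, smul_eq_mul, mul_one,
      sub_self]
  have huq : star u ⬝ᵥ q = 0 := by
    rw [hq, dotProduct_sub, dotProduct_smul, hup, huv, smul_eq_mul, mul_zero,
      sub_self]
  have hpv : star p ⬝ᵥ v = ((τ : ℝ) : ℂ) := by
    rw [dot_conj_symm, hvp, Complex.conj_ofReal]
  have hqv : star q ⬝ᵥ v = 0 := by
    rw [hq, star_sub, star_smul, sub_dotProduct, smul_dotProduct, hpv, hvv,
      smul_eq_mul, mul_one]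
    simp [Complex.conj_ofReal]
  have hqp : star q ⬝ᵥ p = ((τ - τ ^ 2 : ℝ) : ℂ) := by
    rw [hq, star_sub, star_smul, sub_dotProduct, smul_dotProduct, hpp]
    have h9 : star v ⬝ᵥ p = ((τ : ℝ) : ℂ) := hvp
    rw [h9]
    simp only [star_trivial, RCLike.star_def, Complex.conj_ofReal, smul_eq_mul]
    push_cast
    ring
  have hqq : star q ⬝ᵥ q = ((τ - τ ^ 2 : ℝ) : ℂ) := by
    have h12 : star q ⬝ᵥ q = star q ⬝ᵥ p - ((τ : ℝ) : ℂ) * (star q ⬝ᵥ v) := by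
      rw [show (star q ⬝ᵥ p - ((τ : ℝ) : ℂ) * (star q ⬝ᵥ v))
          = star q ⬝ᵥ (p - ((τ : ℝ) : ℂ) • v) by
        rw [dotProduct_sub, dotProduct_smul, smul_eq_mul], ← hq]
    rw [h12, hqp, hqv, mul_zero, sub_zero]
  -- Rayleigh facts
  have hvWq : star v ⬝ᵥ (W *ᵥ q) = 0 := by
    have hsym : star v ᵥ* W = star (W *ᵥ v) := by
      rw [Matrix.star_mulVec, hH.eq]
    rw [Matrix.dotProduct_mulVec, hsym, hWv, star_smul, smul_dotProduct, hvq]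
    simp
  have hqWv : star q ⬝ᵥ (W *ᵥ v) = 0 := by
    rw [hWv, dotProduct_smul, hqv]
    simp
  have hvWv : star v ⬝ᵥ (W *ᵥ v) = ((f i₁ : ℝ) : ℂ) := by
    rw [hWv, dotProduct_smul, hvv, smul_eq_mul, mul_one]
  have hp_eq : p = q + ((τ : ℝ) : ℂ) • v := by
    rw [hq]
    abel
  have hpWp : star p ⬝ᵥ (W *ᵥ p)
      = star q ⬝ᵥ (W *ᵥ q) + ((τ ^ 2 * f i₁ : ℝ) : ℂ) := by
    conv_lhs => rw [hp_eq]
    rw [Matrix.mulVec_add, Matrix.mulVec_smul, star_add, star_smul]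
    rw [add_dotProduct, smul_dotProduct, dotProduct_add,
      dotProduct_add, dotProduct_smul, dotProduct_smul]
    rw [hqWv, hvWq, hvWv]
    simp only [star_trivial, RCLike.star_def, Complex.conj_ofReal, smul_eq_mul, mul_zero,
      add_zero, zero_add]
    push_cast
    ring
  -- block positivity
  have hblock : 0 ≤ (star p ⬝ᵥ (W *ᵥ p)).re := (hBP.2 a b).1
  have hmain : 0 ≤ (star q ⬝ᵥ (W *ᵥ q)).re + τ ^ 2 * f i₁ := by
    rw [hpWp] at hblock
    rw [show ((τ ^ 2 * f i₁ : ℝ) : ℂ) = (((τ ^ 2 * f i₁ : ℝ) : ℝ) : ℂ) from rfl] at hblock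
    simp only [Complex.add_re, Complex.ofReal_re] at hblock
    exact hblock
  -- Rayleigh bound
  have hray : (star q ⬝ᵥ (W *ᵥ q)).re ≤ t₂ * (τ - τ ^ 2) := by
    have h10 := rayleigh_bound hH t₂ i₀ hbound q huq
    rw [hqq] at h10
    simp only [Complex.ofReal_re] at h10
    exact h10
  -- τ ≤ 1
  have hτ1 : τ ≤ 1 := by
    have h11 := dot_self_re_nonneg q
    rw [hqq] at h11
    simp only [Complex.ofReal_re] at h11
    nlinarith
  -- conclude
  rw [← hfi₁]
  by_contra hcon
  push_neg at hcon
  have hkey : 0 ≤ t₂ * (τ - τ ^ 2) + τ ^ 2 * f i₁ := by linarith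
  have hfneg : f i₁ < 0 := by rw [hfi₁]; exact htminneg
  have hA : 0 < -f i₁ - t₂ := by linarith
  have hEq : t₂ * (τ - τ ^ 2) + τ ^ 2 * f i₁
      = f i₁ * (τ * (2 * τ - 1)) - (-f i₁ - t₂) * (τ * (1 - τ)) := by ring
  have hx : 0 ≤ τ * (2 * τ - 1) := mul_nonneg (by linarith) (by linarith)
  have hy : 0 ≤ τ * (1 - τ) := mul_nonneg (by linarith) (by linarith)
  have h20 : (-f i₁ - t₂) * (τ * (1 - τ)) ≤ f i₁ * (τ * (2 * τ - 1)) := by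
    rw [hEq] at hkey; linarith
  have h21 : f i₁ * (τ * (2 * τ - 1)) ≤ 0 :=
    mul_nonpos_of_nonpos_of_nonneg hfneg.le hx
  have h22 : 0 ≤ (-f i₁ - t₂) * (τ * (1 - τ)) := mul_nonneg hA.le hy
  have h23 : f i₁ * (τ * (2 * τ - 1)) = 0 := le_antisymm h21 (le_trans h22 h20)
  have h24 : τ * (2 * τ - 1) = 0 := by
    rcases mul_eq_zero.mp h23 with h | h
    · exact absurd h hfneg.ne
    · exact h
  have h25 : (-f i₁ - t₂) * (τ * (1 - τ)) = 0 := le_antisymm (by linarith) h22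
  have h26 : τ * (1 - τ) = 0 := by
    rcases mul_eq_zero.mp h25 with h | h
    · exact absurd h hA.ne'
    · exact h
  have h27 : τ ^ 2 = 0 := by
    have h28 : τ ^ 2 = τ * (2 * τ - 1) + τ * (1 - τ) := by ring
    rw [h28, h24, h26, add_zero]
  nlinarith [h27, hτhalf]

end
end

section
/- Let m, n ≥ 2 and let W be a normalized m×n decomposable entanglement witness (i.e., W = P + Q^Γ with P, Q positive semidefinite, tr(W) = 1, and W is not positive semidefinite). Then tr(W²) = 1 if and only if there exists a unit vector ψ : Fin m × Fin n → ℂ which is not a product vector such that W is the partial transpose of the rank-one projection onto ψ, i.e., W = (ψ ψᴴ)^Γ where (ψ ψᴴ)((i,k),(j,l)) = ψ(i,k) * conj(ψ(j,l)). -/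
open Matrix ComplexOrder

noncomputable section

open Complex ComplexConjugate

set_option maxHeartbeats 1000000

variable {N : Type*} [Fintype N] [DecidableEq N]
variable {m n : ℕ}

lemma cs_key {ι : Type*} [Fintype ι] (x y : ι → ℂ) :
    (∑ i, normSq (((∑ j, normSq (x j) : ℝ) : ℂ) * y i - (∑ j, x j * y j) * conj (x i)))
      = (∑ j, normSq (x j)) *
        ((∑ j, normSq (x j)) * (∑ i, normSq (y i)) - normSq (∑ j, x j * y j)) := by
  set N : ℝ := ∑ j, normSq (x j) with hN
  set S : ℂ := ∑ j, x j * y j with hS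
  have h1 : ∀ i, normSq ((N : ℂ) * y i - S * conj (x i))
      = N ^ 2 * normSq (y i) + normSq S * normSq (x i)
        - 2 * N * ((x i * y i) * conj S).re := by
    intro i
    simp only [Complex.normSq_apply, Complex.mul_re, Complex.mul_im, Complex.sub_re,
      Complex.sub_im, Complex.ofReal_re, Complex.ofReal_im, Complex.conj_re, Complex.conj_im]
    ring
  rw [Finset.sum_congr rfl (fun i _ => h1 i)]
  have h2 : (∑ i, ((x i * y i) * conj S).re) = normSq S := by
    rw [← Complex.re_sum, ← Finset.sum_mul, ← hS, Complex.mul_conj]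
    simp
  simp only [Finset.sum_sub_distrib, Finset.sum_add_distrib, ← Finset.mul_sum, h2, ← hN]
  ring


lemma cs_ineq {ι : Type*} [Fintype ι] (x y : ι → ℂ) :
    normSq (∑ j, x j * y j) ≤ (∑ j, normSq (x j)) * (∑ i, normSq (y i)) := by
  set N : ℝ := ∑ j, normSq (x j) with hN
  rcases eq_or_lt_of_le (show (0:ℝ) ≤ N from Finset.sum_nonneg fun i _ => normSq_nonneg _)
    with h0 | hpos
  · have hx : ∀ i, x i = 0 := by
      intro i
      have := (Finset.sum_eq_zero_iff_of_nonneg (fun i _ => normSq_nonneg (x i))).mp h0.symm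
      exact normSq_eq_zero.mp (this i (Finset.mem_univ i))
    have : (∑ j, x j * y j) = 0 := Finset.sum_eq_zero fun j _ => by rw [hx j, zero_mul]
    rw [this]
    simp [← hN, ← h0]
  · have hkey := cs_key x y
    have hnn : 0 ≤ ∑ i, normSq (((N:ℝ):ℂ) * y i - (∑ j, x j * y j) * conj (x i)) :=
      Finset.sum_nonneg fun i _ => normSq_nonneg _
    rw [hkey] at hnn
    nlinarith [hnn]

lemma cs_eq {ι : Type*} [Fintype ι] (x y : ι → ℂ)
    (hx : (∑ j, normSq (x j)) ≠ 0)
    (h : normSq (∑ j, x j * y j) = (∑ j, normSq (x j)) * (∑ i, normSq (y i))) :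
    ∃ c : ℂ, ∀ i, y i = c * conj (x i) := by
  set N : ℝ := ∑ j, normSq (x j) with hN
  set S : ℂ := ∑ j, x j * y j with hS
  have hkey := cs_key x y
  rw [← hS, ← hN, ← h] at hkey
  simp only [sub_self, mul_zero] at hkey
  have hz : ∀ i, (N:ℂ) * y i - S * conj (x i) = 0 := by
    intro i
    have := (Finset.sum_eq_zero_iff_of_nonneg (fun i _ => normSq_nonneg _)).mp hkey
    exact normSq_eq_zero.mp (this i (Finset.mem_univ i))
  refine ⟨S / (N:ℂ), fun i => ?_⟩
  have hNne : (N:ℂ) ≠ 0 := by exact_mod_cast hx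
  field_simp
  have := hz i
  linear_combination this


lemma trace_mul_expand {N : Type*} [Fintype N] (A B : Matrix N N ℂ) :
    (A * B).trace = ∑ p, ∑ q, A p q * B q p := by
  simp [Matrix.trace, Matrix.diag, Matrix.mul_apply]

lemma trace_ptrans (M : Matrix (Fin m × Fin n) (Fin m × Fin n) ℂ) :
    (ptrans M).trace = M.trace := by
  simp [Matrix.trace, Matrix.diag, ptrans]

lemma trace_mul_ptrans (A B : Matrix (Fin m × Fin n) (Fin m × Fin n) ℂ) :
    (ptrans A * ptrans B).trace = (A * B).trace := by
  rw [trace_mul_expand, trace_mul_expand,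
    ← Fintype.sum_prod_type' (f := fun p q => ptrans A p q * ptrans B q p),
    ← Fintype.sum_prod_type' (f := fun p q => A p q * B q p)]
  let e : ((Fin m × Fin n) × (Fin m × Fin n)) ≃ ((Fin m × Fin n) × (Fin m × Fin n)) :=
    { toFun := fun z => ((z.2.1, z.1.2), (z.1.1, z.2.2)),
      invFun := fun z => ((z.2.1, z.1.2), (z.1.1, z.2.2)),
      left_inv := fun z => rfl, right_inv := fun z => rfl }
  exact Fintype.sum_equiv e _ _ (fun z => rfl)

lemma vecMulVec_star_posSemidef (v : Fin m × Fin n → ℂ) :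
    (vecMulVec v (star v)).PosSemidef := by
  refine Matrix.PosSemidef.of_dotProduct_mulVec_nonneg ?_ ?_
  · ext p q
    simp [vecMulVec_apply, Matrix.conjTranspose_apply, mul_comm]
  · intro x
    have : star x ⬝ᵥ (vecMulVec v (star v)).mulVec x
        = conj (∑ q, conj (v q) * x q) * (∑ q, conj (v q) * x q) := by
      simp only [dotProduct, Matrix.mulVec, vecMulVec_apply, Pi.star_apply, RCLike.star_def]
      rw [map_sum]
      rw [Finset.sum_mul]
      congr 1
      ext p
      rw [Finset.mul_sum, Finset.mul_sum]
      congr 1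
      ext q
      simp [mul_comm, mul_left_comm, mul_assoc]
    rw [this, ← Complex.normSq_eq_conj_mul_self]
    exact_mod_cast Complex.zero_le_real.mpr (normSq_nonneg _)


lemma ptrans_prod (a : Fin m → ℂ) (b : Fin n → ℂ) :
    ptrans (vecMulVec (prodVec a b) (star (prodVec a b)))
      = vecMulVec (prodVec (star a) b) (star (prodVec (star a) b)) := by
  ext p q
  simp only [ptrans, vecMulVec_apply, prodVec, Pi.star_apply, RCLike.star_def,
    _root_.map_mul, Complex.conj_conj]
  ring

lemma ptrans_prod_posSemidef (a : Fin m → ℂ) (b : Fin n → ℂ) :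
    (ptrans (vecMulVec (prodVec a b) (star (prodVec a b)))).PosSemidef := by
  rw [ptrans_prod]
  exact vecMulVec_star_posSemidef _

lemma trace_vecMulVec_star {N : Type*} [Fintype N] (v : N → ℂ) :
    (vecMulVec v (star v)).trace = ((∑ p, normSq (v p) : ℝ) : ℂ) := by
  simp only [Matrix.trace, Matrix.diag, vecMulVec_apply, Pi.star_apply, RCLike.star_def,
    Complex.mul_conj]
  push_cast
  rfl

lemma diag_re_nonneg {N : Type*} [Fintype N] [DecidableEq N] {A : Matrix N N ℂ}
    (hA : A.PosSemidef) (p : N) : 0 ≤ (A p p).re := by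
  have h := hA.dotProduct_mulVec_nonneg (Pi.single p 1)
  have : star (Pi.single p 1 : N → ℂ) ⬝ᵥ A.mulVec (Pi.single p 1) = A p p := by
    simp [dotProduct, Matrix.mulVec, Pi.single_apply]
  rw [this] at h
  exact (Complex.le_def.mp h).1

lemma entry_normSq_le {N : Type*} [Fintype N] [DecidableEq N] {A : Matrix N N ℂ}
    (hA : A.PosSemidef) (p q : N) : normSq (A p q) ≤ (A p p).re * (A q q).re := by
  obtain ⟨B, rfl⟩ : ∃ B : Matrix N N ℂ, A = Bᴴ * B := by
    open MatrixOrder in exact CStarAlgebra.nonneg_iff_eq_star_mul_self.mp hA.nonneg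
  have h1 : ∀ r s : N, (Bᴴ * B) r s = ∑ k, conj (B k r) * B k s := by
    intro r s; simp [Matrix.mul_apply, Matrix.conjTranspose_apply]
  have h2 : ∀ r : N, ((Bᴴ * B) r r).re = ∑ k, normSq (B k r) := by
    intro r
    rw [h1, Complex.re_sum]
    congr 1
    ext k
    rw [show ((starRingEnd ℂ) (B k r) * B k r) = ((normSq (B k r) : ℝ) : ℂ) from
      (Complex.normSq_eq_conj_mul_self).symm, Complex.ofReal_re]
  rw [h1, h2, h2]
  have := cs_ineq (fun k => conj (B k p)) (fun k => B k q)
  simpa [Complex.normSq_conj] using this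

variable {N : Type*} [Fintype N] [DecidableEq N]

lemma trace_eq_sum_eigs {A : Matrix N N ℂ} (hA : A.IsHermitian) :
    A.trace = ∑ i, (hA.eigenvalues i : ℂ) := by
  conv_lhs => rw [hA.spectral_theorem, Unitary.conjStarAlgAut_apply]
  rw [Matrix.trace_mul_cycle]
  rw [show (star (hA.eigenvectorUnitary : Matrix N N ℂ)) * (hA.eigenvectorUnitary : Matrix N N ℂ)
      = 1 from Matrix.UnitaryGroup.star_mul_self _]
  rw [one_mul, Matrix.trace_diagonal]
  rfl

lemma trace_sq_eq_sum_eigs {A : Matrix N N ℂ} (hA : A.IsHermitian) :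
    (A * A).trace = ∑ i, ((hA.eigenvalues i : ℂ) * (hA.eigenvalues i : ℂ)) := by
  have hU : (star (hA.eigenvectorUnitary : Matrix N N ℂ)) *
      (hA.eigenvectorUnitary : Matrix N N ℂ) = 1 := Matrix.UnitaryGroup.star_mul_self _
  conv_lhs => rw [hA.spectral_theorem, Unitary.conjStarAlgAut_apply]
  have : ((hA.eigenvectorUnitary : Matrix N N ℂ) * diagonal (RCLike.ofReal ∘ hA.eigenvalues)
        * (star (hA.eigenvectorUnitary : Matrix N N ℂ)))
      * ((hA.eigenvectorUnitary : Matrix N N ℂ) * diagonal (RCLike.ofReal ∘ hA.eigenvalues)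
        * (star (hA.eigenvectorUnitary : Matrix N N ℂ)))
      = (hA.eigenvectorUnitary : Matrix N N ℂ)
        * (diagonal (RCLike.ofReal ∘ hA.eigenvalues) * diagonal (RCLike.ofReal ∘ hA.eigenvalues))
        * (star (hA.eigenvectorUnitary : Matrix N N ℂ)) := by
    simp only [Matrix.mul_assoc]
    rw [← Matrix.mul_assoc (star (hA.eigenvectorUnitary : Matrix N N ℂ))
      (hA.eigenvectorUnitary : Matrix N N ℂ), hU, one_mul]
  rw [this, Matrix.trace_mul_cycle, hU, one_mul, Matrix.diagonal_mul_diagonal,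
    Matrix.trace_diagonal]
  rfl

lemma trace_sq_le {A : Matrix N N ℂ} (hA : A.PosSemidef) :
    ((A * A).trace).re ≤ ((A.trace).re)^2 := by
  rw [trace_eq_sum_eigs hA.1, trace_sq_eq_sum_eigs hA.1]
  push_cast [Complex.re_sum]
  simp only [Complex.ofReal_re, Complex.mul_re, Complex.ofReal_im, mul_zero, sub_zero]
  have hnn := hA.eigenvalues_nonneg
  calc ∑ i, hA.1.eigenvalues i * hA.1.eigenvalues i
      ≤ ∑ i, hA.1.eigenvalues i * (∑ j, hA.1.eigenvalues j) := by
        apply Finset.sum_le_sum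
        intro i _
        exact mul_le_mul_of_nonneg_left
          (Finset.single_le_sum (fun j _ => hnn j) (Finset.mem_univ i)) (hnn i)
    _ = (∑ i, hA.1.eigenvalues i)^2 := by rw [← Finset.sum_mul]; ring


lemma rankOne {A : Matrix N N ℂ} (hA : A.PosSemidef)
    (h : ((A * A).trace).re = ((A.trace).re)^2) :
    ∃ v : N → ℂ, A = vecMulVec v (star v) := by
  classical
  set lam := hA.1.eigenvalues with hlam
  have hnn := hA.eigenvalues_nonneg
  have htr : (A.trace).re = ∑ i, lam i := by
    rw [trace_eq_sum_eigs hA.1, Complex.re_sum]; simp [hlam]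
  have htr2 : ((A * A).trace).re = ∑ i, lam i * lam i := by
    rw [trace_sq_eq_sum_eigs hA.1, Complex.re_sum]
    simp [hlam, Complex.mul_re]
  rw [htr, htr2] at h
  -- each i : lam i = 0 or lam i = total sum
  have hsq : ∑ i, lam i * ((∑ j, lam j) - lam i) = 0 := by
    rw [Finset.sum_congr rfl (fun i _ => mul_sub (lam i) _ _), Finset.sum_sub_distrib,
      ← Finset.sum_mul, h]
    ring
  have hterm : ∀ i, lam i * ((∑ j, lam j) - lam i) = 0 := by
    intro i
    have := (Finset.sum_eq_zero_iff_of_nonneg (fun i _ => mul_nonneg (hnn i)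
      (sub_nonneg.mpr (Finset.single_le_sum (fun j _ => hnn j) (Finset.mem_univ i))))).mp hsq
    exact this i (Finset.mem_univ i)
  -- entrywise formula for A
  have hent : ∀ p q, A p q = ∑ i, (lam i : ℂ) * (hA.1.eigenvectorUnitary : Matrix N N ℂ) p i
      * conj ((hA.1.eigenvectorUnitary : Matrix N N ℂ) q i) := by
    intro p q
    conv_lhs => rw [hA.1.spectral_theorem, Unitary.conjStarAlgAut_apply]
    simp only [Matrix.mul_apply, Matrix.diagonal_apply, Matrix.star_apply, RCLike.star_def,
      Function.comp_apply, mul_ite, mul_zero, Finset.sum_ite_eq', Finset.mem_univ, if_true]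
    congr 1
    ext i
    simp only [← hlam]
    congr 1
    exact mul_comm _ _
  by_cases h0 : ∀ i, lam i = 0
  · refine ⟨0, ?_⟩
    ext p q
    rw [hent]
    simp [h0, Matrix.vecMulVec_apply]
  · push_neg at h0
    obtain ⟨i0, hi0⟩ := h0
    have hpos : 0 < lam i0 := lt_of_le_of_ne (hnn i0) (Ne.symm hi0)
    have hothers : ∀ j, j ≠ i0 → lam j = 0 := by
      intro j hj
      by_contra hlj
      have hposj : 0 < lam j := lt_of_le_of_ne (hnn j) (Ne.symm hlj)
      have h1 := hterm i0
      have h2 : (∑ k, lam k) - lam i0 = 0 := by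
        rcases mul_eq_zero.mp h1 with h | h
        · exact absurd h hi0
        · exact h
      have : lam i0 + lam j ≤ ∑ k, lam k := by
        have := Finset.add_sum_erase Finset.univ lam (Finset.mem_univ i0)
        rw [← this]
        have : lam j ≤ ∑ k ∈ Finset.univ.erase i0, lam k :=
          Finset.single_le_sum (fun k _ => hnn k)
            (Finset.mem_erase.mpr ⟨hj, Finset.mem_univ j⟩)
        linarith
      linarith
    refine ⟨fun p => (Real.sqrt (lam i0) : ℂ) * (hA.1.eigenvectorUnitary : Matrix N N ℂ) p i0, ?_⟩
    ext p q
    rw [hent]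
    rw [Finset.sum_eq_single i0]
    · simp only [vecMulVec_apply, Pi.star_apply, RCLike.star_def, _root_.map_mul,
        Complex.conj_conj, Complex.conj_ofReal]
      have : ((Real.sqrt (lam i0) : ℂ)) * ((Real.sqrt (lam i0) : ℂ)) = (lam i0 : ℂ) := by
        rw [← Complex.ofReal_mul, Real.mul_self_sqrt (hnn i0)]
      ring_nf
      rw [show ((Real.sqrt (lam i0) : ℂ))^2 = (lam i0 : ℂ) by rw [sq]; exact this]
      ring
    · intro b _ hb; simp [hothers b hb]
    · intro hi; exact absurd (Finset.mem_univ i0) hi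


lemma abs_entry_le {N : Type*} [Fintype N] [DecidableEq N] {A : Matrix N N ℂ}
    (hA : A.PosSemidef) (p q : N) :
    ‖A p q‖ ≤ Real.sqrt ((A p p).re) * Real.sqrt ((A q q).re) := by
  rw [← Real.sqrt_mul_self (norm_nonneg (A p q))] 
  rw [← Real.sqrt_mul (diag_re_nonneg hA p)]
  apply Real.sqrt_le_sqrt
  calc ‖A p q‖ * ‖A p q‖ = normSq (A p q) := by
        rw [← Complex.sq_norm (A p q)]; ring
    _ ≤ (A p p).re * (A q q).re := entry_normSq_le hA p q

set_option maxHeartbeats 1000000 in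
lemma t_bound {P Q : Matrix (Fin m × Fin n) (Fin m × Fin n) ℂ}
    (hP : P.PosSemidef) (hQ : Q.PosSemidef) :
    ((P * ptrans Q).trace).re ≤ (P.trace).re * (Q.trace).re := by
  classical
  set dP : Fin m × Fin n → ℝ := fun z => Real.sqrt ((P z z).re) with hdP
  set dQ : Fin m × Fin n → ℝ := fun z => Real.sqrt ((Q z z).re) with hdQ
  have hdPnn : ∀ z, 0 ≤ dP z := fun z => Real.sqrt_nonneg _
  have hdQnn : ∀ z, 0 ≤ dQ z := fun z => Real.sqrt_nonneg _
  have step1 : ((P * ptrans Q).trace).re ≤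
      ∑ z : (Fin m × Fin n) × (Fin m × Fin n),
        (dP z.1 * dQ (z.1.1, z.2.2)) * (dP z.2 * dQ (z.2.1, z.1.2)) := by
    rw [trace_mul_expand, ← Fintype.sum_prod_type'
      (f := fun p q => P p q * ptrans Q q p), Complex.re_sum]
    apply Finset.sum_le_sum
    intro z _
    have h1 : (P z.1 z.2 * ptrans Q z.2 z.1).re ≤ ‖P z.1 z.2‖
        * ‖ptrans Q z.2 z.1‖ := by
      calc (P z.1 z.2 * ptrans Q z.2 z.1).re ≤ ‖P z.1 z.2 * ptrans Q z.2 z.1‖ :=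
            Complex.re_le_norm _
        _ = _ := by rw [norm_mul]
    refine h1.trans ?_
    have h2 := abs_entry_le hP z.1 z.2
    have h3 : ‖ptrans Q z.2 z.1‖ ≤ dQ (z.1.1, z.2.2) * dQ (z.2.1, z.1.2) := by
      have := abs_entry_le hQ (z.1.1, z.2.2) (z.2.1, z.1.2)
      simpa [ptrans, hdQ] using this
    calc ‖P z.1 z.2‖ * ‖ptrans Q z.2 z.1‖
        ≤ (dP z.1 * dP z.2) * (dQ (z.1.1, z.2.2) * dQ (z.2.1, z.1.2)) := by
          apply mul_le_mul h2 h3 (norm_nonneg _)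
          exact mul_nonneg (hdPnn _) (hdPnn _)
      _ = _ := by ring
  set S : Fin n × Fin n → ℝ := fun w => ∑ i, dP (i, w.1) * dQ (i, w.2) with hS
  have step2 : (∑ z : (Fin m × Fin n) × (Fin m × Fin n),
        (dP z.1 * dQ (z.1.1, z.2.2)) * (dP z.2 * dQ (z.2.1, z.1.2)))
      = ∑ w : Fin n × Fin n, S w * S (w.2, w.1) := by
    have : ∀ w : Fin n × Fin n, S w * S (w.2, w.1)
        = ∑ ij : Fin m × Fin m, (dP (ij.1, w.1) * dQ (ij.1, w.2))
            * (dP (ij.2, w.2) * dQ (ij.2, w.1)) := by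
      intro w
      rw [hS]
      simp only
      rw [Finset.sum_mul_sum, ← Fintype.sum_prod_type']
    rw [Finset.sum_congr rfl (fun w _ => this w)]
    rw [← Fintype.sum_prod_type']
    refine Fintype.sum_equiv
      ⟨fun z => ((z.1.2, z.2.2), (z.1.1, z.2.1)), fun y => ((y.2.1, y.1.1), (y.2.2, y.1.2)),
        fun z => rfl, fun y => rfl⟩ _ _ (fun z => rfl)
  have step3 : (∑ w : Fin n × Fin n, S w * S (w.2, w.1)) ≤ ∑ w : Fin n × Fin n, S w ^ 2 := by
    have h1 : ∀ w : Fin n × Fin n, S w * S (w.2, w.1) ≤ (S w ^ 2 + S (w.2, w.1) ^ 2) / 2 := by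
      intro w
      nlinarith [sq_nonneg (S w - S (w.2, w.1))]
    refine (Finset.sum_le_sum fun w _ => h1 w).trans ?_
    rw [← Finset.sum_div, Finset.sum_add_distrib]
    have : (∑ w : Fin n × Fin n, S (w.2, w.1) ^ 2) = ∑ w : Fin n × Fin n, S w ^ 2 :=
      Fintype.sum_equiv (Equiv.prodComm _ _) _ _ (fun w => rfl)
    rw [this]
    ring_nf
    exact le_refl _
  have step4 : (∑ w : Fin n × Fin n, S w ^ 2) ≤ (P.trace).re * (Q.trace).re := by
    have h1 : ∀ w : Fin n × Fin n, S w ^ 2 ≤ (∑ i, dP (i, w.1) ^ 2) * (∑ i, dQ (i, w.2) ^ 2) :=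
      fun w => Finset.sum_mul_sq_le_sq_mul_sq Finset.univ _ _
    refine (Finset.sum_le_sum fun w _ => h1 w).trans ?_
    have hPd : ∀ z : Fin m × Fin n, (P z z).re = dP z ^ 2 := by
      intro z
      rw [hdP]
      simp only
      rw [Real.sq_sqrt (diag_re_nonneg hP z)]
    have hQd : ∀ z : Fin m × Fin n, (Q z z).re = dQ z ^ 2 := by
      intro z
      rw [hdQ]
      simp only
      rw [Real.sq_sqrt (diag_re_nonneg hQ z)]
    have hPtr : (P.trace).re = ∑ k : Fin n, ∑ i : Fin m, dP (i, k) ^ 2 := by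
      simp only [Matrix.trace, Matrix.diag]
      rw [Complex.re_sum, Finset.sum_congr rfl (fun z _ => hPd z),
        Fintype.sum_prod_type (f := fun z : Fin m × Fin n => dP z ^ 2), Finset.sum_comm]
    have hQtr : (Q.trace).re = ∑ l : Fin n, ∑ i : Fin m, dQ (i, l) ^ 2 := by
      simp only [Matrix.trace, Matrix.diag]
      rw [Complex.re_sum, Finset.sum_congr rfl (fun z _ => hQd z),
        Fintype.sum_prod_type (f := fun z : Fin m × Fin n => dQ z ^ 2), Finset.sum_comm]
    rw [hPtr, hQtr, Finset.sum_mul_sum]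
    exact le_of_eq (Fintype.sum_prod_type _)
  linarith



lemma re_mul_conj_le (z w : ℂ) : (z * conj w).re ≤ (normSq z + normSq w) / 2 := by
  have h := normSq_nonneg (z - w)
  rw [Complex.normSq_sub] at h
  linarith

lemma prod_of_eq (v w : Fin m × Fin n → ℂ)
    (hw : (∑ z, normSq (w z)) ≠ 0)
    (ht : ((vecMulVec w (star w) * ptrans (vecMulVec v (star v))).trace).re
        = (∑ z, normSq (w z)) * (∑ z, normSq (v z))) :
    ∃ (a : Fin m → ℂ) (b : Fin n → ℂ), v = prodVec a b := by
  classical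
  set B : Fin n × Fin n → ℂ := fun u => ∑ j : Fin m, v (j, u.1) * w (j, u.2) with hB
  set V : Fin n → ℝ := fun k => ∑ j : Fin m, normSq (v (j, k)) with hV
  set Wf : Fin n → ℝ := fun l => ∑ j : Fin m, normSq (w (j, l)) with hWf
  -- trace formula
  have htr : (vecMulVec w (star w) * ptrans (vecMulVec v (star v))).trace
      = ∑ u : Fin n × Fin n, B (u.2, u.1) * conj (B u) := by
    rw [trace_mul_expand, ← Fintype.sum_prod_type'
      (f := fun p q => vecMulVec w (star w) p q * ptrans (vecMulVec v (star v)) q p)]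
    have hterm : ∀ u : Fin n × Fin n, B (u.2, u.1) * conj (B u)
        = ∑ ij : Fin m × Fin m, (v (ij.1, u.2) * w (ij.1, u.1))
            * conj (v (ij.2, u.1) * w (ij.2, u.2)) := by
      intro u
      rw [hB]
      simp only [map_sum]
      rw [Finset.sum_mul_sum, ← Fintype.sum_prod_type']
    rw [Finset.sum_congr rfl (fun u _ => hterm u), ← Fintype.sum_prod_type']
    refine Fintype.sum_equiv
      ⟨fun z => ((z.1.2, z.2.2), (z.1.1, z.2.1)), fun y => ((y.2.1, y.1.1), (y.2.2, y.1.2)),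
        fun z => rfl, fun y => rfl⟩ _ _ ?_
    intro z
    simp only [Equiv.coe_fn_mk, vecMulVec_apply, ptrans, Pi.star_apply, RCLike.star_def,
      _root_.map_mul]
    ring
  -- chain of inequalities
  have step1 : ((vecMulVec w (star w) * ptrans (vecMulVec v (star v))).trace).re
      ≤ ∑ u : Fin n × Fin n, normSq (B u) := by
    rw [htr, Complex.re_sum]
    have h1 : ∀ u : Fin n × Fin n, (B (u.2, u.1) * conj (B u)).re
        ≤ (normSq (B (u.2, u.1)) + normSq (B u)) / 2 := fun u => re_mul_conj_le _ _
    refine (Finset.sum_le_sum fun u _ => h1 u).trans ?_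
    rw [← Finset.sum_div, Finset.sum_add_distrib]
    have : (∑ u : Fin n × Fin n, normSq (B (u.2, u.1))) = ∑ u : Fin n × Fin n, normSq (B u) :=
      Fintype.sum_equiv (Equiv.prodComm _ _) _ _ (fun u => rfl)
    rw [this]
    ring_nf
    exact le_refl _
  have hBle : ∀ u : Fin n × Fin n, normSq (B u) ≤ V u.1 * Wf u.2 := by
    intro u
    have := cs_ineq (fun j : Fin m => v (j, u.1)) (fun j : Fin m => w (j, u.2))
    simpa [hB, hV, hWf] using this
  have hVW : (∑ u : Fin n × Fin n, V u.1 * Wf u.2)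
      = (∑ z, normSq (w z)) * (∑ z, normSq (v z)) := by
    have h1 : (∑ z : Fin m × Fin n, normSq (v z)) = ∑ k : Fin n, V k := by
      rw [Fintype.sum_prod_type (f := fun z : Fin m × Fin n => normSq (v z)), Finset.sum_comm]
    have h2 : (∑ z : Fin m × Fin n, normSq (w z)) = ∑ l : Fin n, Wf l := by
      rw [Fintype.sum_prod_type (f := fun z : Fin m × Fin n => normSq (w z)), Finset.sum_comm]
    rw [h1, h2, Finset.sum_mul_sum]
    rw [show (∑ u : Fin n × Fin n, V u.1 * Wf u.2)
      = ∑ k : Fin n, ∑ l : Fin n, V k * Wf l from Fintype.sum_prod_type _]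
    rw [Finset.sum_comm]
    exact Finset.sum_congr rfl fun y _ => Finset.sum_congr rfl fun x _ => mul_comm _ _
  have step2 : (∑ u : Fin n × Fin n, normSq (B u)) ≤ ∑ u : Fin n × Fin n, V u.1 * Wf u.2 :=
    Finset.sum_le_sum fun u _ => hBle u
  -- equality forced
  have heq : ∀ u : Fin n × Fin n, normSq (B u) = V u.1 * Wf u.2 := by
    have hsum : (∑ u : Fin n × Fin n, normSq (B u)) = ∑ u : Fin n × Fin n, V u.1 * Wf u.2 := by
      refine le_antisymm step2 ?_
      rw [hVW, ← ht]
      exact step1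
    intro u
    exact (Finset.sum_eq_sum_iff_of_le (fun u _ => hBle u)).mp hsum u (Finset.mem_univ u)
  -- pick l0 with Wf l0 ≠ 0
  have hWtot : (∑ l : Fin n, Wf l) ≠ 0 := by
    intro hc
    apply hw
    rw [Fintype.sum_prod_type (f := fun z : Fin m × Fin n => normSq (w z)), Finset.sum_comm]
    exact hc
  obtain ⟨l0, _, hl0⟩ := Finset.exists_ne_zero_of_sum_ne_zero hWtot
  -- for each k, v (·,k) is a multiple of conj (w (·,l0))
  have hcol : ∀ k : Fin n, ∃ c : ℂ, ∀ j : Fin m, v (j, k) = conj (w (j, l0)) * c := by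
    intro k
    by_cases hVk : V k = 0
    · refine ⟨0, fun j => ?_⟩
      have : ∀ j, normSq (v (j, k)) = 0 := by
        intro j
        have := (Finset.sum_eq_zero_iff_of_nonneg
          (fun j _ => normSq_nonneg (v (j, k)))).mp hVk
        exact this j (Finset.mem_univ j)
      rw [normSq_eq_zero.mp (this j), mul_zero]
    · obtain ⟨c, hc⟩ := cs_eq (fun j : Fin m => v (j, k)) (fun j : Fin m => w (j, l0)) hVk
        (by simpa [hB, hV, hWf] using heq (k, l0))
      have hcne : c ≠ 0 := by
        intro h0
        apply hl0
        rw [hWf]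
        simp only
        apply Finset.sum_eq_zero
        intro j _
        rw [hc j, h0, zero_mul, normSq_zero]
      have hcc : conj c ≠ 0 := fun h => hcne (by simpa using congrArg conj h)
      refine ⟨(conj c)⁻¹, fun j => ?_⟩
      have h2 := congrArg conj (hc j)
      rw [_root_.map_mul, Complex.conj_conj] at h2
      rw [h2, mul_comm (conj c) (v (j, k)), mul_assoc, mul_inv_cancel₀ hcc, mul_one]
  choose b hb using hcol
  refine ⟨fun j => conj (w (j, l0)), b, ?_⟩
  funext z
  exact hb z.2 z.1


theorem stmt_10' {m n : ℕ} (hm : 2 ≤ m) (hn : 2 ≤ n)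
    (W : Matrix (Fin m × Fin n) (Fin m × Fin n) ℂ)
    (hNP : ¬ W.PosSemidef) (htr : W.trace = 1)
    (hD : ∃ P Q : Matrix (Fin m × Fin n) (Fin m × Fin n) ℂ,
      P.PosSemidef ∧ Q.PosSemidef ∧ W = P + ptrans Q) :
    ((W * W).trace).re = 1 ↔
      ∃ ψ : Fin m × Fin n → ℂ,
        (∑ p, Complex.normSq (ψ p)) = 1 ∧
        (¬ ∃ (a : Fin m → ℂ) (b : Fin n → ℂ), ψ = prodVec a b) ∧
        W = ptrans (Matrix.vecMulVec ψ (star ψ)) := by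
  obtain ⟨P, Q, hP, hQ, hW⟩ := hD
  constructor
  · intro h2
    have htrPQ : (P.trace).re + (Q.trace).re = 1 := by
      have h := congrArg Complex.re (show W.trace = P.trace + Q.trace by
        rw [hW, Matrix.trace_add, trace_ptrans])
      rw [htr] at h
      simpa [Complex.add_re] using h.symm
    have hexp : ((W * W).trace).re = ((P * P).trace).re
        + 2 * ((P * ptrans Q).trace).re + ((Q * Q).trace).re := by
      have : (W * W).trace = (P * P).trace + 2 * (P * ptrans Q).trace
          + (ptrans Q * ptrans Q).trace := by
        rw [hW, add_mul, mul_add, mul_add, Matrix.trace_add, Matrix.trace_add, Matrix.trace_add,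
          Matrix.trace_mul_comm (ptrans Q) P]
        ring
      rw [this, trace_mul_ptrans] at *
      simp [Complex.add_re, Complex.mul_re]
    have hA := trace_sq_le hP
    have hBq := trace_sq_le hQ
    have hT := t_bound hP hQ
    have hsq : ((P.trace).re + (Q.trace).re)^2 = 1 := by rw [htrPQ]; norm_num
    have ha : ((P * P).trace).re = ((P.trace).re)^2 := by nlinarith
    have hb : ((Q * Q).trace).re = ((Q.trace).re)^2 := by nlinarith
    have htE : ((P * ptrans Q).trace).re = (P.trace).re * (Q.trace).re := by nlinarith
    obtain ⟨w, hPw⟩ := rankOne hP ha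
    obtain ⟨v, hQv⟩ := rankOne hQ hb
    have hptr : (P.trace).re = ∑ z, normSq (w z) := by
      rw [hPw, trace_vecMulVec_star]
      simp
    have hqtr : (Q.trace).re = ∑ z, normSq (v z) := by
      rw [hQv, trace_vecMulVec_star]
      simp
    by_cases hq0 : (∑ z, normSq (v z)) = 0
    · exfalso
      apply hNP
      have hv0 : ∀ z, v z = 0 := fun z => normSq_eq_zero.mp
        ((Finset.sum_eq_zero_iff_of_nonneg (fun z _ => normSq_nonneg (v z))).mp hq0 z
          (Finset.mem_univ z))
      have hQ0 : Q = 0 := by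
        rw [hQv]
        ext p q
        simp [Matrix.vecMulVec_apply, hv0]
      have : W = P := by
        rw [hW, hQ0]
        have : ptrans (0 : Matrix (Fin m × Fin n) (Fin m × Fin n) ℂ) = 0 := by
          ext p q
          simp [ptrans]
        rw [this, add_zero]
      rw [this, hPw]
      exact vecMulVec_star_posSemidef w
    · by_cases hp0 : (∑ z, normSq (w z)) = 0
      · have hw0 : ∀ z, w z = 0 := fun z => normSq_eq_zero.mp
          ((Finset.sum_eq_zero_iff_of_nonneg (fun z _ => normSq_nonneg (w z))).mp hp0 z
            (Finset.mem_univ z))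
        have hP0 : P = 0 := by
          rw [hPw]
          ext p q
          simp [Matrix.vecMulVec_apply, hw0]
        have hWform : W = ptrans (vecMulVec v (star v)) := by
          rw [hW, hP0, hQv, zero_add]
        refine ⟨v, ?_, ?_, hWform⟩
        · rw [← hqtr]
          rw [hptr] at htrPQ
          rw [hp0] at htrPQ
          linarith
        · rintro ⟨a, b, rfl⟩
          exact hNP (hWform ▸ ptrans_prod_posSemidef a b)
      · exfalso
        have ht' : ((vecMulVec w (star w) * ptrans (vecMulVec v (star v))).trace).re
            = (∑ z, normSq (w z)) * (∑ z, normSq (v z)) := by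
          rw [← hPw, ← hQv, htE, hptr, hqtr]
        obtain ⟨a, b, hv⟩ := prod_of_eq v w hp0 ht'
        apply hNP
        rw [hW, hPw, hQv, hv]
        exact (vecMulVec_star_posSemidef w).add (ptrans_prod_posSemidef a b)
  · rintro ⟨ψ, hψ1, hψ2, hψW⟩
    rw [hψW, trace_mul_ptrans]
    have hcalc : (vecMulVec ψ (star ψ) * vecMulVec ψ (star ψ)).trace
        = ((∑ p, normSq (ψ p) : ℝ) : ℂ)^2 := by
      rw [trace_mul_expand]
      have : ∀ p q : Fin m × Fin n, vecMulVec ψ (star ψ) p q * vecMulVec ψ (star ψ) q p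
          = ((normSq (ψ p) : ℝ) : ℂ) * ((normSq (ψ q) : ℝ) : ℂ) := by
        intro p q
        simp only [Matrix.vecMulVec_apply, Pi.star_apply, RCLike.star_def]
        rw [show ψ p * conj (ψ q) * (ψ q * conj (ψ p))
          = (ψ p * conj (ψ p)) * (ψ q * conj (ψ q)) by ring, Complex.mul_conj, Complex.mul_conj]
      rw [Finset.sum_congr rfl (fun p _ => Finset.sum_congr rfl (fun q _ => this p q))]
      rw [show (∑ p, ∑ q, ((normSq (ψ p) : ℝ) : ℂ) * ((normSq (ψ q) : ℝ) : ℂ))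
        = (∑ p, ((normSq (ψ p) : ℝ) : ℂ)) * (∑ q, ((normSq (ψ q) : ℝ) : ℂ)) from
        (Finset.sum_mul_sum _ _ _ _).symm]
      rw [sq]
      push_cast
      ring
    rw [hcalc, hψ1]
    norm_num

/-- For a normalized `m × n` decomposable entanglement witness, `tr(W²) = 1`
iff `W` is the partial transpose of a rank-one projection onto a unit vector
which is not a product vector. -/
theorem stmt_10 {m n : ℕ} (hm : 2 ≤ m) (hn : 2 ≤ n)
    (W : Matrix (Fin m × Fin n) (Fin m × Fin n) ℂ)
    (hBP : BlockPositive W) (hNP : ¬ W.PosSemidef) (htr : W.trace = 1)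
    (hD : Decomposable W) :
    ((W * W).trace).re = 1 ↔
      ∃ ψ : Fin m × Fin n → ℂ,
        (∑ p, Complex.normSq (ψ p)) = 1 ∧
        (¬ ∃ (a : Fin m → ℂ) (b : Fin n → ℂ), ψ = prodVec a b) ∧
        W = ptrans (Matrix.vecMulVec ψ (star ψ)) :=
  stmt_10' hm hn W hNP htr hD

end
end
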